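/- arXiv:1405.7072 — 7 statements merged into one kernel-verified Lean document; each statement's English description precedes it below -/
import Mathlib

section
/- There exists ζ₀ > 0 and a unique C¹ (indeed analytic) function ψ : [0, ζ₀) → ℝ with ψ(0) = 1 solving the singular first-order ODE dψ/dζ = (2(1-ψ) + ζψ²)/(ζ(1 - ζψ)) on (0, ζ₀); moreover ψ(ζ) = 1 + ζ/3 + o(ζ) as ζ → 0⁺. -/
/-!
The substitution `w = ζ² (ψ - 1)` removes the singularity: the equation becomes
`w' = ζ² ψ (2 - ψ) / (1 - ζ ψ)` with `ψ = 1 + w / ζ²`, and for `0 ≤ ζ ≤ 1/100` and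
`|ψ - 1| ≤ 1/2` this right-hand side is `O(ζ²)` and `8`-Lipschitz in `w`. After clamping `ψ`
to `[1/2, 3/2]`, Picard–Lindelöf gives a solution with `w(0) = 0`; then `|w| ≤ 2ζ³`, so the
clamp is inactive and `ψ → 1`, and L'Hôpital applied to `w / ζ³` gives `(ψ - 1) / ζ → 1/3`,
hence `ψ' → 1/3` and `ψ` is `C¹` up to `0`.

For uniqueness, a `C¹` solution `φ` with `φ(0) = 1` turns into a solution `ζ² (φ - 1)` of the
same Lipschitz equation, with derivative `0` at `0`, as long as `φ` stays in `[1/2, 3/2]`.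
Grönwall gives local uniqueness, and since `ψ` stays strictly inside that window, a continuity
argument propagates `φ = ψ` to all of `[0, 1/100)`.
-/

open Set Filter
open scoped Topology

theorem contDiffOn_one_Ico_of_tendsto_deriv {f f' : ℝ → ℝ} {a b L : ℝ} (hab : a < b)
    (hf : ContinuousWithinAt f (Ici a) a) (hderiv : ∀ x ∈ Ioo a b, HasDerivAt f (f' x) x)
    (hf' : ContinuousOn f' (Ioo a b)) (hlim : Tendsto f' (𝓝[>] a) (𝓝 L)) :
    ContDiffOn ℝ 1 f (Ico a b) := by
  have hderiv_eq : ∀ x ∈ Ioo a b, derivWithin f (Ico a b) x = f' x := fun x hx ↦ by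
    rw [derivWithin_of_mem_nhds (mem_of_superset (Ioo_mem_nhds hx.1 hx.2) Ioo_subset_Ico_self)]
    exact (hderiv x hx).deriv
  have hdiff : DifferentiableOn ℝ f (Ioo a b) := fun x hx ↦
    (hderiv x hx).differentiableAt.differentiableWithinAt
  have ha : HasDerivWithinAt f L (Ici a) a := by
    refine hasDerivWithinAt_Ici_of_tendsto_deriv hdiff (hf.mono (Ioo_subset_Ioi_self.trans
      Ioi_subset_Ici_self)) (Ioo_mem_nhdsGT hab) (hlim.congr' ?_)
    filter_upwards [Ioo_mem_nhdsGT hab] with x hx using (hderiv x hx).deriv.symm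
  have ha_Ico : derivWithin f (Ico a b) a = L :=
    (ha.mono Ico_subset_Ici_self).derivWithin (uniqueDiffOn_Ico a b a (left_mem_Ico.2 hab))
  rw [contDiffOn_one_iff_derivWithin (uniqueDiffOn_Ico a b)]
  refine ⟨fun x hx ↦ ?_, fun x hx ↦ ?_⟩
  · rcases hx.1.eq_or_lt with rfl | hax
    · exact (ha.mono Ico_subset_Ici_self).differentiableWithinAt
    · exact (hdiff x ⟨hax, hx.2⟩).mono_of_mem_nhdsWithin
        (mem_nhdsWithin_of_mem_nhds (Ioo_mem_nhds hax hx.2))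
  · rcases hx.1.eq_or_lt with rfl | hax
    · have hIoo : ContinuousWithinAt (derivWithin f (Ico a b)) (Ioo a b) a := by
        rw [ContinuousWithinAt, nhdsWithin_Ioo_eq_nhdsGT hab, ha_Ico]
        refine hlim.congr' ?_
        filter_upwards [Ioo_mem_nhdsGT hab] with y hy using (hderiv_eq y hy).symm
      have := continuousWithinAt_insert_self.2 hIoo
      rwa [Ioo_insert_left hab] at this
    · refine ((hf'.continuousAt (Ioo_mem_nhds hax hx.2)).congr ?_).continuousWithinAt
      filter_upwards [Ioo_mem_nhds hax hx.2] with y hy using (hderiv_eq y hy).symm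

noncomputable def odeRhs (ζ ψ : ℝ) : ℝ := (2 * (1 - ψ) + ζ * ψ ^ 2) / (ζ * (1 - ζ * ψ))

structure IsSolution (φ : ℝ → ℝ) (b : ℝ) : Prop where
  contDiffOn : ContDiffOn ℝ 1 φ (Ico 0 b)
  map_zero : φ 0 = 1
  hasDerivAt : ∀ ζ ∈ Ioo 0 b, HasDerivAt φ (odeRhs ζ (φ ζ)) ζ

noncomputable def reducedRhs (ζ ψ : ℝ) : ℝ := ψ * (2 - ψ) / (1 - ζ * ψ)

lemma sq_mul_reducedRhs {ζ ψ : ℝ} (hζ : ζ ≠ 0) (hψ : 1 - ζ * ψ ≠ 0) :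
    ζ ^ 2 * reducedRhs ζ ψ = 2 * ζ * (ψ - 1) + ζ ^ 2 * odeRhs ζ ψ := by
  unfold reducedRhs odeRhs
  field_simp
  ring

lemma hasDerivAt_odeRhs_iff {φ : ℝ → ℝ} {t : ℝ} (ht : t ≠ 0) (hφ : 1 - t * φ t ≠ 0) :
    HasDerivAt φ (odeRhs t (φ t)) t ↔
      HasDerivAt (fun s ↦ s ^ 2 * (φ s - 1)) (t ^ 2 * reducedRhs t (φ t)) t := by
  rw [sq_mul_reducedRhs ht hφ]
  constructor
  · intro h
    refine ((hasDerivAt_pow 2 t).mul (h.sub_const 1)).congr_deriv ?_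
    norm_num
  · intro h
    have hφ_eq : (fun s ↦ 1 + s ^ 2 * (φ s - 1) / s ^ 2) =ᶠ[𝓝 t] φ := by
      filter_upwards [isOpen_ne.mem_nhds ht] with s hs
      field_simp
      ring
    refine (((h.div (hasDerivAt_pow 2 t) (pow_ne_zero 2 ht)).const_add 1).congr_of_eventuallyEq
      hφ_eq.symm).congr_deriv ?_
    push_cast
    field_simp
    ring

lemma tendsto_odeRhs {ψ : ℝ → ℝ} {L : ℝ} (hψ : Tendsto ψ (𝓝[>] 0) (𝓝 1))
    (hslope : Tendsto (fun t ↦ (ψ t - 1) / t) (𝓝[>] 0) (𝓝 L)) :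
    Tendsto (fun t ↦ odeRhs t (ψ t)) (𝓝[>] 0) (𝓝 (1 - 2 * L)) := by
  have hid : Tendsto (fun t : ℝ ↦ t) (𝓝[>] 0) (𝓝 0) := tendsto_id.mono_left nhdsWithin_le_nhds
  have hlim := ((hψ.pow 2).sub (hslope.const_mul 2)).div
    (tendsto_const_nhds.sub (hid.mul hψ)) (by norm_num : (1 : ℝ) - 0 * 1 ≠ 0)
  rw [one_pow, zero_mul, sub_zero, div_one] at hlim
  refine hlim.congr' ?_
  filter_upwards [self_mem_nhdsWithin] with t (ht : 0 < t)
  rw [Pi.div_apply, odeRhs, ← div_div]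
  congr 1
  field_simp
  ring

lemma one_half_le_one_sub_mul {ζ ψ : ℝ} (hζ₀ : 0 ≤ ζ) (hζ : ζ ≤ 1 / 100)
    (hψ : ψ ∈ Icc (1 / 2) (3 / 2)) : 1 / 2 ≤ 1 - ζ * ψ := by
  nlinarith [hψ.1, hψ.2]

lemma abs_reducedRhs_le {ζ ψ : ℝ} (hζ₀ : 0 ≤ ζ) (hζ : ζ ≤ 1 / 100)
    (hψ : ψ ∈ Icc (1 / 2) (3 / 2)) : |reducedRhs ζ ψ| ≤ 2 := by
  have hd := one_half_le_one_sub_mul hζ₀ hζ hψ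
  rw [reducedRhs, abs_div, abs_of_pos (by linarith : 0 < 1 - ζ * ψ),
    div_le_iff₀ (by linarith), abs_le]
  constructor <;> nlinarith [hψ.1, hψ.2]

lemma abs_reducedRhs_sub_le {ζ ψ ψ' : ℝ} (hζ₀ : 0 ≤ ζ) (hζ : ζ ≤ 1 / 100)
    (hψ : ψ ∈ Icc (1 / 2) (3 / 2)) (hψ' : ψ' ∈ Icc (1 / 2) (3 / 2)) :
    |reducedRhs ζ ψ - reducedRhs ζ ψ'| ≤ 8 * |ψ - ψ'| := by
  have hd := one_half_le_one_sub_mul hζ₀ hζ hψ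
  have hd' := one_half_le_one_sub_mul hζ₀ hζ hψ'
  have hsub : reducedRhs ζ ψ - reducedRhs ζ ψ' =
      (ψ - ψ') * (2 - ψ - ψ' + ζ * ψ * ψ') / ((1 - ζ * ψ) * (1 - ζ * ψ')) := by
    unfold reducedRhs
    rw [div_sub_div _ _ (by linarith) (by linarith)]
    ring
  have hfactor : |2 - ψ - ψ' + ζ * ψ * ψ'| ≤ 2 := by
    rw [abs_le]; constructor <;> nlinarith [hψ.1, hψ.2, hψ'.1, hψ'.2]
  have hdd : 1 / 4 ≤ (1 - ζ * ψ) * (1 - ζ * ψ') := by nlinarith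
  rw [hsub, abs_div, abs_mul, abs_of_pos (by linarith : 0 < (1 - ζ * ψ) * (1 - ζ * ψ')),
    div_le_iff₀ (by linarith)]
  nlinarith [abs_nonneg (ψ - ψ'), mul_le_mul_of_nonneg_left hfactor (abs_nonneg (ψ - ψ'))]

/-- `reducedRhs` in the variable `w = ζ² (ψ - 1)`, with `ψ` clamped to `[1/2, 3/2]`: the clamp
makes the field globally `8`-Lipschitz in `w` for `0 ≤ ζ ≤ 1/100`. -/
noncomputable def clampedRhs (t w : ℝ) : ℝ :=
  t ^ 2 * reducedRhs t (projIcc (1 / 2) (3 / 2) (by norm_num) (1 + w / t ^ 2))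

lemma clampedRhs_sq_mul_sub_one {t ψ : ℝ} (ht : t ≠ 0) (hψ : ψ ∈ Icc (1 / 2) (3 / 2)) :
    clampedRhs t (t ^ 2 * (ψ - 1)) = t ^ 2 * reducedRhs t ψ := by
  have : 1 + t ^ 2 * (ψ - 1) / t ^ 2 = ψ := by field_simp; ring
  rw [clampedRhs, this, projIcc_of_mem _ hψ]

lemma abs_clampedRhs_le {t : ℝ} (w : ℝ) (ht₀ : 0 ≤ t) (ht : t ≤ 1 / 100) :
    |clampedRhs t w| ≤ 2 * t ^ 2 := by
  rw [clampedRhs, abs_mul, abs_of_nonneg (sq_nonneg t), mul_comm]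
  exact mul_le_mul_of_nonneg_right (abs_reducedRhs_le ht₀ ht (Subtype.mem _)) (sq_nonneg t)

lemma lipschitzWith_clampedRhs {t : ℝ} (ht₀ : 0 ≤ t) (ht : t ≤ 1 / 100) :
    LipschitzWith 8 (clampedRhs t) := by
  rcases ht₀.eq_or_lt with rfl | ht₀
  · have : clampedRhs 0 = fun _ ↦ 0 := by ext; simp [clampedRhs]
    rw [this]
    exact LipschitzWith.const' 0
  refine LipschitzWith.of_dist_le_mul fun w w' ↦ ?_
  have hproj : dist (projIcc (1 / 2) (3 / 2) (by norm_num) (1 + w / t ^ 2) : ℝ)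
      (projIcc (1 / 2) (3 / 2) (by norm_num) (1 + w' / t ^ 2)) ≤ |w - w'| / t ^ 2 := by
    refine ((LipschitzWith.projIcc _).dist_le_mul _ _).trans_eq ?_
    rw [NNReal.coe_one, one_mul, Real.dist_eq, add_sub_add_left_eq_sub, ← sub_div, abs_div,
      abs_of_pos (by positivity : (0 : ℝ) < t ^ 2)]
  rw [Real.dist_eq] at hproj ⊢
  calc |clampedRhs t w - clampedRhs t w'|
      = t ^ 2 * |reducedRhs t (projIcc (1 / 2) (3 / 2) (by norm_num) (1 + w / t ^ 2))
          - reducedRhs t (projIcc (1 / 2) (3 / 2) (by norm_num) (1 + w' / t ^ 2))| := by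
        rw [clampedRhs, clampedRhs, ← mul_sub, abs_mul, abs_of_nonneg (sq_nonneg t)]
    _ ≤ t ^ 2 * (8 * (|w - w'| / t ^ 2)) := by
        gcongr
        exact (abs_reducedRhs_sub_le ht₀.le ht (Subtype.mem _) (Subtype.mem _)).trans
          (by gcongr)
    _ = 8 * |w - w'| := by field_simp

lemma continuousOn_clampedRhs (w : ℝ) : ContinuousOn (clampedRhs · w) (Icc 0 (1 / 100)) := by
  intro t ht
  rcases ht.1.eq_or_lt with rfl | ht₀
  · have hbound : Tendsto (fun t : ℝ ↦ 2 * t ^ 2) (𝓝[Icc 0 (1 / 100)] 0) (𝓝 0) :=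
      ((by fun_prop : Continuous fun t : ℝ ↦ 2 * t ^ 2).tendsto' 0 0 (by simp)).mono_left
        nhdsWithin_le_nhds
    refine tendsto_iff_norm_sub_tendsto_zero.2 (squeeze_zero' (.of_forall fun _ ↦ norm_nonneg _)
      ?_ (by simpa [clampedRhs] using hbound))
    filter_upwards [self_mem_nhdsWithin] with s hs
    simpa [clampedRhs] using abs_clampedRhs_le w hs.1 hs.2
  · have hproj := Subtype.mem (projIcc (1 / 2 : ℝ) (3 / 2) (by norm_num) (1 + w / t ^ 2))
    have hd : 1 - t * projIcc (1 / 2 : ℝ) (3 / 2) (by norm_num) (1 + w / t ^ 2) ≠ 0 :=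
      (one_half_le_one_sub_mul ht₀.le ht.2 hproj).trans_lt' (by norm_num) |>.ne'
    refine ContinuousAt.continuousWithinAt ?_
    unfold clampedRhs reducedRhs
    have hcl : ContinuousAt (fun s : ℝ ↦ (projIcc (1 / 2 : ℝ) (3 / 2) (by norm_num)
        (1 + w / s ^ 2) : ℝ)) t :=
      continuous_subtype_val.continuousAt.comp (continuous_projIcc.continuousAt.comp
        (by fun_prop (disch := positivity)))
    exact (continuousAt_id.pow 2).mul (((hcl.mul (continuousAt_const.sub hcl)).div
      (continuousAt_const.sub (continuousAt_id.mul hcl))) hd)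

lemma exists_clampedRhs_solution : ∃ w : ℝ → ℝ, w 0 = 0 ∧ ∀ t ∈ Icc (0 : ℝ) (1 / 100),
    HasDerivWithinAt w (clampedRhs t (w t)) (Icc 0 (1 / 100)) t := by
  have hPL :
      IsPicardLindelof clampedRhs (⟨0, by norm_num⟩ : Icc (0 : ℝ) (1 / 100)) 0 1 0 1 8 :=
    { lipschitzOnWith := fun t ht ↦ (lipschitzWith_clampedRhs ht.1 ht.2).lipschitzOnWith
      continuousOn := fun w _ ↦ continuousOn_clampedRhs w
      norm_le := fun t ht w _ ↦ (abs_clampedRhs_le w ht.1 ht.2).trans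
        (by rw [NNReal.coe_one]; nlinarith [ht.1, ht.2])
      mul_max_le := by norm_num }
  exact hPL.exists_eq_forall_mem_Icc_hasDerivWithinAt₀

section FromClampedSolution

variable {ψ w : ℝ → ℝ}
  (hw : ∀ t ∈ Icc (0 : ℝ) (1 / 100),
    HasDerivWithinAt w (clampedRhs t (w t)) (Icc 0 (1 / 100)) t)
  (hψw : ∀ t ∈ Icc (0 : ℝ) (1 / 100), w t = t ^ 2 * (ψ t - 1)) (hψ₀ : ψ 0 = 1)

include hw hψw hψ₀

lemma abs_sub_one_le_of_clamped {t : ℝ} (ht : t ∈ Icc (0 : ℝ) (1 / 100)) :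
    |ψ t - 1| ≤ 2 * t := by
  rcases ht.1.eq_or_lt with rfl | ht₀
  · simp [hψ₀]
  have hmvt := norm_image_sub_le_of_norm_deriv_le_segment' (C := 2 * t ^ 2)
    (fun s hs ↦ (hw s ⟨hs.1, hs.2.trans ht.2⟩).mono (Icc_subset_Icc_right ht.2))
    (fun s hs ↦ (abs_clampedRhs_le _ hs.1 (hs.2.le.trans ht.2)).trans (by
      gcongr; exacts [hs.1, hs.2.le])) t ⟨ht₀.le, le_rfl⟩
  rw [hψw t ht, hψw 0 ⟨le_rfl, by norm_num⟩, Real.norm_eq_abs, hψ₀, sub_self, mul_zero,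
    sub_zero, sub_zero, abs_mul, abs_of_pos (by positivity : (0 : ℝ) < t ^ 2), mul_assoc,
    mul_left_comm, mul_le_mul_iff_right₀ (by positivity)] at hmvt
  exact hmvt

lemma mem_Ioo_of_clamped {t : ℝ} (ht : t ∈ Icc (0 : ℝ) (1 / 100)) :
    ψ t ∈ Ioo (1 / 2) (3 / 2) := by
  have := abs_le.1 (abs_sub_one_le_of_clamped hw hψw hψ₀ ht)
  constructor <;> linarith [ht.2]

lemma tendsto_nhdsGE_of_clamped : Tendsto ψ (𝓝[≥] 0) (𝓝 1) := by
  have hbound : Tendsto (fun t : ℝ ↦ 2 * t) (𝓝[≥] 0) (𝓝 0) :=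
    ((by fun_prop : Continuous fun t : ℝ ↦ 2 * t).tendsto' 0 0 (by simp)).mono_left
      nhdsWithin_le_nhds
  refine tendsto_iff_norm_sub_tendsto_zero.2 (squeeze_zero' (.of_forall fun _ ↦ norm_nonneg _)
    ?_ hbound)
  filter_upwards [Icc_mem_nhdsGE (by norm_num : (0 : ℝ) < 1 / 100)] with t ht
  exact abs_sub_one_le_of_clamped hw hψw hψ₀ ht

lemma hasDerivAt_of_clamped {t : ℝ} (ht : t ∈ Ioo (0 : ℝ) (1 / 100)) :
    HasDerivAt (fun s ↦ s ^ 2 * (ψ s - 1)) (t ^ 2 * reducedRhs t (ψ t)) t := by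
  have hψt := Ioo_subset_Icc_self (mem_Ioo_of_clamped hw hψw hψ₀ (Ioo_subset_Icc_self ht))
  rw [← clampedRhs_sq_mul_sub_one ht.1.ne' hψt, ← hψw t (Ioo_subset_Icc_self ht)]
  refine ((hw t (Ioo_subset_Icc_self ht)).hasDerivAt
    (Icc_mem_nhds ht.1 ht.2)).congr_of_eventuallyEq ?_
  filter_upwards [Icc_mem_nhds ht.1 ht.2] with s hs using (hψw s hs).symm

lemma hasDerivAt_odeRhs_of_clamped {t : ℝ} (ht : t ∈ Ioo (0 : ℝ) (1 / 100)) :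
    HasDerivAt ψ (odeRhs t (ψ t)) t := by
  have hψt := Ioo_subset_Icc_self (mem_Ioo_of_clamped hw hψw hψ₀ (Ioo_subset_Icc_self ht))
  refine (hasDerivAt_odeRhs_iff ht.1.ne' ?_).2 (hasDerivAt_of_clamped hw hψw hψ₀ ht)
  exact ((one_half_le_one_sub_mul ht.1.le ht.2.le hψt).trans_lt' (by norm_num)).ne'

lemma tendsto_slope_of_clamped : Tendsto (fun t ↦ (ψ t - 1) / t) (𝓝[>] 0) (𝓝 (1 / 3)) := by
  have hψ : Tendsto ψ (𝓝[>] 0) (𝓝 1) :=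
    (tendsto_nhdsGE_of_clamped hw hψw hψ₀).mono_left (nhdsWithin_mono _ Ioi_subset_Ici_self)
  have hid : Tendsto (fun t : ℝ ↦ t) (𝓝[>] 0) (𝓝 0) :=
    tendsto_id.mono_left nhdsWithin_le_nhds
  have hR : Tendsto (fun t ↦ reducedRhs t (ψ t) / 3) (𝓝[>] 0) (𝓝 (1 / 3)) := by
    have := ((hψ.mul ((tendsto_const_nhds (x := (2 : ℝ))).sub hψ)).div
      ((tendsto_const_nhds (x := (1 : ℝ))).sub (hid.mul hψ))
      (by norm_num : (1 : ℝ) - 0 * 1 ≠ 0)).div_const 3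
    norm_num at this
    exact this
  have hdiv : Tendsto (fun t ↦ t ^ 2 * reducedRhs t (ψ t) / ((3 : ℕ) * t ^ (3 - 1)))
      (𝓝[>] 0) (𝓝 (1 / 3)) := by
    refine hR.congr' ?_
    filter_upwards [self_mem_nhdsWithin] with t (ht : 0 < t)
    field_simp
    norm_num
  refine (HasDerivAt.lhopital_zero_right_on_Ioo (by norm_num : (0 : ℝ) < 1 / 100)
    (fun t ht ↦ hasDerivAt_of_clamped hw hψw hψ₀ ht) (fun t _ ↦ hasDerivAt_pow 3 t)
    (fun t ht ↦ by have := ht.1; positivity) (by simpa using (hid.pow 2).mul (hψ.sub_const 1))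
    (by simpa using hid.pow 3) hdiv).congr' ?_
  filter_upwards [self_mem_nhdsWithin] with t (ht : 0 < t)
  field_simp

lemma contDiffOn_of_clamped : ContDiffOn ℝ 1 ψ (Ico 0 (1 / 100)) := by
  have hψc : ContinuousOn ψ (Ioo 0 (1 / 100)) := fun t ht ↦
    (hasDerivAt_odeRhs_of_clamped hw hψw hψ₀ ht).continuousAt.continuousWithinAt
  have hrhs : ContinuousOn (fun t ↦ odeRhs t (ψ t)) (Ioo 0 (1 / 100)) := by
    unfold odeRhs
    refine ContinuousOn.div (by fun_prop) (by fun_prop) fun t ht ↦ mul_ne_zero ht.1.ne' ?_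
    exact ((one_half_le_one_sub_mul ht.1.le ht.2.le (Ioo_subset_Icc_self
      (mem_Ioo_of_clamped hw hψw hψ₀ (Ioo_subset_Icc_self ht)))).trans_lt' (by norm_num)).ne'
  have hψ := tendsto_nhdsGE_of_clamped hw hψw hψ₀
  refine contDiffOn_one_Ico_of_tendsto_deriv (by norm_num) (by rwa [ContinuousWithinAt, hψ₀])
    (fun t ht ↦ hasDerivAt_odeRhs_of_clamped hw hψw hψ₀ ht) hrhs (L := 1 / 3) ?_
  convert tendsto_odeRhs (hψ.mono_left (nhdsWithin_mono _ Ioi_subset_Ici_self))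
    (tendsto_slope_of_clamped hw hψw hψ₀) using 2
  norm_num

end FromClampedSolution

theorem exists_isSolution : ∃ ψ : ℝ → ℝ, IsSolution ψ (1 / 100) ∧
    (∀ t ∈ Ico (0 : ℝ) (1 / 100), ψ t ∈ Ioo (1 / 2) (3 / 2)) ∧
    Tendsto (fun t ↦ (ψ t - 1) / t) (𝓝[>] 0) (𝓝 (1 / 3)) := by
  obtain ⟨w, hw₀, hw⟩ := exists_clampedRhs_solution
  -- `ψ 0 = 1` because `w 0 / 0 = 0` in Lean
  set ψ : ℝ → ℝ := fun t ↦ 1 + w t / t ^ 2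
  have hψ₀ : ψ 0 = 1 := by simp [ψ]
  have hψw : ∀ t ∈ Icc (0 : ℝ) (1 / 100), w t = t ^ 2 * (ψ t - 1) := fun t _ ↦ by
    rcases eq_or_ne t 0 with rfl | ht
    · simp [hw₀]
    · show w t = t ^ 2 * (1 + w t / t ^ 2 - 1)
      field_simp
      ring
  exact ⟨ψ, ⟨contDiffOn_of_clamped hw hψw hψ₀, hψ₀,
      fun t ht ↦ hasDerivAt_odeRhs_of_clamped hw hψw hψ₀ ht⟩,
    fun t ht ↦ mem_Ioo_of_clamped hw hψw hψ₀ (Ico_subset_Icc_self ht),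
    tendsto_slope_of_clamped hw hψw hψ₀⟩

namespace IsSolution

variable {φ ψ : ℝ → ℝ} {b : ℝ}

lemma continuousOn_sq_mul_sub_one (hφ : IsSolution φ b) :
    ContinuousOn (fun s ↦ s ^ 2 * (φ s - 1)) (Ico 0 b) :=
  (continuous_pow 2).continuousOn.mul (hφ.contDiffOn.continuousOn.sub continuousOn_const)

lemma hasDerivWithinAt_clampedRhs (hφ : IsSolution φ b) (hb : b ≤ 1 / 100) {t : ℝ}
    (ht : t ∈ Ico 0 b) (hφt : φ t ∈ Icc (1 / 2) (3 / 2)) :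
    HasDerivWithinAt (fun s ↦ s ^ 2 * (φ s - 1)) (clampedRhs t (t ^ 2 * (φ t - 1)))
      (Ici t) t := by
  rcases ht.1.eq_or_lt with rfl | ht₀
  · have hdiff := (hφ.contDiffOn.differentiableOn one_ne_zero 0 ht).hasDerivWithinAt
    refine (((hasDerivAt_pow 2 0).hasDerivWithinAt.mul
      (hdiff.sub_const 1)).mono_of_mem_nhdsWithin (Ico_mem_nhdsGE ht.2)).congr_deriv ?_
    simp [clampedRhs]
  · rw [clampedRhs_sq_mul_sub_one ht₀.ne' hφt]
    refine ((hasDerivAt_odeRhs_iff ht₀.ne' ?_).1 (hφ.hasDerivAt t ⟨ht₀, ht.2⟩)).hasDerivWithinAt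
    exact ((one_half_le_one_sub_mul ht₀.le (ht.2.le.trans hb) hφt).trans_lt' (by norm_num)).ne'

lemma eqOn_Icc (hψ : IsSolution ψ (1 / 100)) (hφ : IsSolution φ (1 / 100)) {x y : ℝ}
    (hx : 0 ≤ x) (hy : y < 1 / 100) (hψy : ∀ t ∈ Icc x y, ψ t ∈ Icc (1 / 2) (3 / 2))
    (hφy : ∀ t ∈ Icc x y, φ t ∈ Icc (1 / 2) (3 / 2)) (hxψφ : ψ x = φ x) :
    EqOn ψ φ (Icc x y) := by
  have hsub : Icc x y ⊆ Ico 0 (1 / 100) := Icc_subset_Ico hx hy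
  have hW := ODE_solution_unique_of_mem_Icc_right (s := fun _ ↦ univ) (K := 8)
    (f := fun s ↦ s ^ 2 * (ψ s - 1)) (g := fun s ↦ s ^ 2 * (φ s - 1))
    (fun t ht ↦ (lipschitzWith_clampedRhs (hx.trans ht.1) (ht.2.le.trans hy.le)).lipschitzOnWith)
    (hψ.continuousOn_sq_mul_sub_one.mono hsub)
    (fun t ht ↦ hψ.hasDerivWithinAt_clampedRhs le_rfl (hsub (Ico_subset_Icc_self ht))
      (hψy t (Ico_subset_Icc_self ht)))
    (fun _ _ ↦ mem_univ _)
    (hφ.continuousOn_sq_mul_sub_one.mono hsub)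
    (fun t ht ↦ hφ.hasDerivWithinAt_clampedRhs le_rfl (hsub (Ico_subset_Icc_self ht))
      (hφy t (Ico_subset_Icc_self ht)))
    (fun _ _ ↦ mem_univ _) (by simp only [hxψφ])
  intro t ht
  rcases eq_or_ne t 0 with rfl | ht₀
  · rw [hψ.map_zero, hφ.map_zero]
  · simpa using mul_left_cancel₀ (pow_ne_zero 2 ht₀) (hW ht)

theorem eqOn (hψ : IsSolution ψ (1 / 100)) (hφ : IsSolution φ (1 / 100))
    (hψb : ∀ t ∈ Ico (0 : ℝ) (1 / 100), ψ t ∈ Ioo (1 / 2) (3 / 2)) :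
    EqOn ψ φ (Ico 0 (1 / 100)) := by
  intro b hb
  have hclosed : IsClosed ({t | ψ t = φ t} ∩ Icc 0 b) := by
    have hc : ContinuousOn (fun t ↦ ψ t - φ t) (Icc 0 b) :=
      (hψ.contDiffOn.continuousOn.sub hφ.contDiffOn.continuousOn).mono (Icc_subset_Ico_right hb.2)
    convert hc.preimage_isClosed_of_isClosed isClosed_Icc (isClosed_singleton (x := 0)) using 1
    ext t
    simp [sub_eq_zero, and_comm]
  refine IsClosed.Icc_subset_of_forall_mem_nhdsWithin hclosed
    (by simp [hψ.map_zero, hφ.map_zero]) (fun x ⟨hxψφ, hx⟩ ↦ ?_) ⟨hb.1, le_rfl⟩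
  have hx' : x ∈ Ico (0 : ℝ) (1 / 100) := ⟨hx.1, hx.2.trans hb.2⟩
  have hnhds : Ico 0 (1 / 100) ∈ 𝓝[≥] x :=
    mem_of_superset (Ico_mem_nhdsGE hx'.2) (Ico_subset_Ico_left hx.1)
  have hball :
      ∀ᶠ t in 𝓝[≥] x, t < b ∧ ψ t ∈ Ioo (1 / 2) (3 / 2) ∧ φ t ∈ Ioo (1 / 2) (3 / 2) := by
    have hφx : φ x ∈ Ioo (1 / 2) (3 / 2) := hxψφ ▸ hψb x hx'
    filter_upwards [Ico_mem_nhdsGE hx.2,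
      ((hψ.contDiffOn.continuousOn x hx').mono_of_mem_nhdsWithin hnhds).eventually
        (Ioo_mem_nhds (hψb x hx').1 (hψb x hx').2),
      ((hφ.contDiffOn.continuousOn x hx').mono_of_mem_nhdsWithin hnhds).eventually
        (Ioo_mem_nhds hφx.1 hφx.2)] with t ht hψt hφt using ⟨ht.2, hψt, hφt⟩
  obtain ⟨y, hxy, hy⟩ := mem_nhdsGE_iff_exists_Icc_subset.1 hball
  have hyb : y < b := (hy ⟨hxy.le, le_rfl⟩).1
  exact mem_of_superset (Icc_mem_nhdsGT hxy) (eqOn_Icc hψ hφ hx.1 (hyb.trans hb.2)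
    (fun t ht ↦ Ioo_subset_Icc_self (hy ht).2.1) (fun t ht ↦ Ioo_subset_Icc_self (hy ht).2.2)
    hxψφ)

end IsSolution

/-- There exist `ζ₀ > 0` and a unique `C¹` function `ψ` on `[0, ζ₀)` with `ψ(0) = 1`
solving `dψ/dζ = (2(1-ψ) + ζψ²)/(ζ(1 - ζψ))` on `(0, ζ₀)`; moreover
`ψ(ζ) = 1 + ζ/3 + o(ζ)` as `ζ → 0⁺`. -/
theorem unstable_manifold_ODE_solution :
    ∃ ζ₀ : ℝ, 0 < ζ₀ ∧ ∃ ψ : ℝ → ℝ,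
      ContDiffOn ℝ 1 ψ (Ico 0 ζ₀) ∧ ψ 0 = 1 ∧
      (∀ ζ ∈ Ioo 0 ζ₀, HasDerivAt ψ
        ((2 * (1 - ψ ζ) + ζ * ψ ζ ^ 2) / (ζ * (1 - ζ * ψ ζ))) ζ) ∧
      Tendsto (fun ζ => (ψ ζ - 1 - ζ / 3) / ζ) (nhdsWithin 0 (Ioi 0)) (nhds 0) ∧
      ∀ ψ' : ℝ → ℝ, ContDiffOn ℝ 1 ψ' (Ico 0 ζ₀) → ψ' 0 = 1 →
        (∀ ζ ∈ Ioo 0 ζ₀, HasDerivAt ψ'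
          ((2 * (1 - ψ' ζ) + ζ * ψ' ζ ^ 2) / (ζ * (1 - ζ * ψ' ζ))) ζ) →
        EqOn ψ ψ' (Ico 0 ζ₀) := by
  obtain ⟨ψ, hψ, hψb, hslope⟩ := exists_isSolution
  refine ⟨1 / 100, by norm_num, ψ, hψ.contDiffOn, hψ.map_zero, hψ.hasDerivAt, ?_,
    fun ψ' h₁ h₂ h₃ ↦ hψ.eqOn ⟨h₁, h₂, h₃⟩ hψb⟩
  have hlim := hslope.sub_const (1 / 3)
  rw [sub_self] at hlim
  refine hlim.congr' ?_
  filter_upwards [self_mem_nhdsWithin] with ζ (hζ : 0 < ζ)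
  field_simp
end

section
/- There exists η₀ > 0 such that for all |η| < η₀, the truncated Thomas–Fermi system ω(z) = z - ξ(z)², (ωξ)'(z) = -η ω(z) on [0,1] with boundary conditions ω(0) = ξ(0) = 0 admits a unique C¹ solution with ω(z) > 0 for z ∈ (0,1] and ω(z) = z + O(z²) as z → 0. -/
/-!
Write `ξ = z g` and `ω = z - ξ²`. Integrating `(ωξ)' = -ηω` from `0` and dividing by `z²` turns the
system into the fixed-point equation `g = Φ g`, `Φ g z = -η/2 + η z⁻² ∫₀^z t² g(t)² dt + z g(z)³`.
For `|η| ≤ 1/100` the map `Φ` sends the ball of radius `1/10` of `C([0,1])` into itself and is a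
`1/2`-contraction there, so it has a fixed point. Then `ξ` is `C¹` by implicit differentiation of
`zξ - ξ³ = -η ∫₀^z ω`, whose `ξ`-derivative `z - 3ξ²` is positive for `z > 0`, while `ξ'(0) = g(0)`.
Conversely, any `C¹` solution vanishing at `0` has a continuous quotient `g = ξ / z` solving
`g = Φ g`; starting from `g(0) = -η/2`, a continuity argument keeps it in the ball, where the fixed
point is unique.
-/

open Set Filter Topology

theorem contDiffOn_one_of_hasDerivWithinAt {𝕜 F : Type*} [NontriviallyNormedField 𝕜]
    [NormedAddCommGroup F] [NormedSpace 𝕜 F] {f f' : 𝕜 → F} {s : Set 𝕜} (hs : UniqueDiffOn 𝕜 s)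
    (hf : ∀ x ∈ s, HasDerivWithinAt f (f' x) s x) (hf' : ContinuousOn f' s) :
    ContDiffOn 𝕜 1 f s :=
  (contDiffOn_one_iff_derivWithin hs).2
    ⟨fun x hx => (hf x hx).differentiableWithinAt,
      hf'.congr fun x hx => (hf x hx).derivWithin (hs x hx)⟩

theorem hasDerivWithinAt_id_mul_zero {g : ℝ → ℝ} {s : Set ℝ} (hg : ContinuousWithinAt g s 0) :
    HasDerivWithinAt (fun z => z * g z) (g 0) s 0 := by
  rw [hasDerivWithinAt_iff_tendsto_slope]
  refine (hg.tendsto.mono_left (nhdsWithin_mono _ sdiff_subset)).congr' ?_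
  filter_upwards [self_mem_nhdsWithin] with z hz
  rw [slope_def_field, sub_zero, zero_mul, sub_zero, mul_div_cancel_left₀ _ hz.2]

theorem exists_continuousOn_eq_id_mul {f : ℝ → ℝ} {s : Set ℝ} (hf : ContinuousOn f s)
    (hd : DifferentiableWithinAt ℝ f s 0) (h0 : f 0 = 0) :
    ∃ g : ℝ → ℝ, ContinuousOn g s ∧ ∀ z ∈ s, f z = z * g z := by
  classical
  refine ⟨Function.update (slope f 0) 0 (derivWithin f s 0), fun z hz => ?_, fun z _ => ?_⟩
  · rcases eq_or_ne z 0 with rfl | hz0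
    · exact continuousWithinAt_update_same.2
        (hasDerivWithinAt_iff_tendsto_slope.1 hd.hasDerivWithinAt)
    · rw [continuousWithinAt_update_of_ne hz0]
      refine ((hf z hz).div continuousWithinAt_id hz0).congr (fun y _ => ?_) ?_ <;>
        simp [slope_def_field, h0]
  · rcases eq_or_ne z 0 with rfl | hz0
    · simp [h0]
    · rw [Function.update_of_ne hz0, slope_def_field, h0, sub_zero, sub_zero,
        mul_div_cancel₀ _ hz0]

/-- Implicit differentiation: the partial derivative of `(y - ξ²) ξ` in `ξ` is `y - 3 ξ²`. -/
theorem HasDerivWithinAt.of_sub_sq_mul {ξ : ℝ → ℝ} {s : Set ℝ} {x u : ℝ}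
    (h : HasDerivWithinAt (fun y => (y - ξ y ^ 2) * ξ y) u s x) (hξ : ContinuousWithinAt ξ s x)
    (hne : x - 3 * ξ x ^ 2 ≠ 0) :
    HasDerivWithinAt ξ ((u - ξ x) / (x - 3 * ξ x ^ 2)) s x := by
  rw [hasDerivWithinAt_iff_tendsto_slope] at h ⊢
  have hξ' : Tendsto ξ (𝓝[s \ {x}] x) (𝓝 (ξ x)) :=
    hξ.tendsto.mono_left (nhdsWithin_mono _ sdiff_subset)
  have hden : Tendsto (fun y => x - (ξ y ^ 2 + ξ y * ξ x + ξ x ^ 2)) (𝓝[s \ {x}] x)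
      (𝓝 (x - 3 * ξ x ^ 2)) := by
    convert tendsto_const_nhds.sub (((hξ'.pow 2).add (hξ'.mul_const _)).add tendsto_const_nhds)
      using 2
    ring
  refine ((h.sub hξ').div hden hne).congr' ?_
  filter_upwards [self_mem_nhdsWithin, hden.eventually_ne hne] with y hy hdy
  rw [Pi.div_apply, div_eq_iff hdy, slope_def_field, slope_def_field]
  field_simp [sub_ne_zero.2 hy.2]
  ring

theorem integral_eq_sub_of_hasDerivWithinAt_Icc {F f : ℝ → ℝ} {a b z : ℝ}
    (hF : ∀ x ∈ Icc a b, HasDerivWithinAt F (f x) (Icc a b) x) (hf : ContinuousOn f (Icc a b))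
    (hz : z ∈ Icc a b) : ∫ t in a..z, f t = F z - F a := by
  have hsub : Icc a z ⊆ Icc a b := Icc_subset_Icc_right hz.2
  exact intervalIntegral.integral_eq_sub_of_hasDerivAt_of_le hz.1
    (fun x hx => (hF x (hsub hx)).continuousWithinAt.mono hsub)
    (fun x hx => (hF x (hsub (Ioo_subset_Icc_self hx))).hasDerivAt
      (Icc_mem_nhds hx.1 (hx.2.trans_le hz.2)))
    ((hf.mono hsub).intervalIntegrable_of_Icc hz.1)

theorem abs_integral_div_sq_le {f : ℝ → ℝ} {z C : ℝ} (hz : 0 ≤ z)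
    (hf : ∀ t ∈ Ioc 0 z, |f t| ≤ z ^ 2 * C) :
    |(∫ t in (0:ℝ)..z, f t) / z ^ 2| ≤ z * C := by
  rcases hz.eq_or_lt with rfl | hz
  · simp
  have hint := intervalIntegral.norm_integral_le_of_norm_le_const (a := 0) (b := z)
    (fun t ht => (Real.norm_eq_abs (f t)).trans_le (hf t (uIoc_of_le hz.le ▸ ht)))
  rw [abs_div, abs_of_pos (pow_pos hz 2), div_le_iff₀ (pow_pos hz 2)]
  calc |∫ t in (0:ℝ)..z, f t| ≤ z ^ 2 * C * |z - 0| := hint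
    _ = z * C * z ^ 2 := by rw [sub_zero, abs_of_pos hz]; ring

namespace ThomasFermi

/-- The map `Φ` of the fixed-point formulation (see `mul_eq_neg_integral_iff`). At `z = 0` the
division by zero yields `-η / 2`, which is also the limit of `Φ g z` as `z → 0`. -/
noncomputable def fixedPointMap (η : ℝ) (g : ℝ → ℝ) (z : ℝ) : ℝ :=
  -η / 2 + η * ((∫ t in (0:ℝ)..z, t ^ 2 * g t ^ 2) / z ^ 2) + z * g z ^ 3

variable {η z : ℝ} {g h : ℝ → ℝ}

@[simp]
lemma fixedPointMap_zero : fixedPointMap η g 0 = -η / 2 := by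
  simp [fixedPointMap]

lemma tendsto_integral_div_sq (hg : ContinuousOn g (Icc 0 1)) :
    Tendsto (fun z => (∫ t in (0:ℝ)..z, t ^ 2 * g t ^ 2) / z ^ 2) (𝓝[Icc 0 1] 0) (𝓝 0) := by
  obtain ⟨K, hK⟩ := isCompact_Icc.exists_bound_of_continuousOn hg
  refine squeeze_zero_norm' (a := fun z => z * K ^ 2) ?_ (tendsto_nhdsWithin_of_tendsto_nhds
    ((continuous_id.mul continuous_const).tendsto' 0 0 (zero_mul (K ^ 2))))
  filter_upwards [self_mem_nhdsWithin] with z hz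
  refine abs_integral_div_sq_le hz.1 fun t ht => ?_
  have hgt : |g t| ≤ K := hK t ⟨ht.1.le, ht.2.trans hz.2⟩
  rw [abs_mul, abs_pow, abs_pow, abs_of_pos ht.1]
  gcongr
  exacts [ht.1.le, ht.2]

lemma continuousOn_fixedPointMap (hg : ContinuousOn g (Icc 0 1)) :
    ContinuousOn (fixedPointMap η g) (Icc 0 1) := by
  have hprim : ContinuousOn (fun z => ∫ t in (0:ℝ)..z, t ^ 2 * g t ^ 2) (Icc 0 1) := by
    have := intervalIntegral.continuousOn_primitive_interval (a := (0:ℝ)) (b := 1)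
      (μ := MeasureTheory.volume) (f := fun t => t ^ 2 * g t ^ 2)
    rw [uIcc_of_le zero_le_one] at this
    exact this ((continuousOn_id.pow 2).mul (hg.pow 2)).integrableOn_Icc
  have hquot : ContinuousOn (fun z => (∫ t in (0:ℝ)..z, t ^ 2 * g t ^ 2) / z ^ 2) (Icc 0 1) := by
    intro z hz
    rcases eq_or_ne z 0 with rfl | hz0
    · simpa [ContinuousWithinAt] using tendsto_integral_div_sq hg
    · exact (hprim z hz).div (continuousWithinAt_id.pow 2) (pow_ne_zero 2 hz0)
  unfold fixedPointMap
  fun_prop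

lemma abs_fixedPointMap_le (hη : |η| ≤ 1 / 100) (hz : z ∈ Icc 0 1)
    (hg : ∀ t ∈ Icc 0 z, |g t| ≤ 1 / 10) : |fixedPointMap η g z| ≤ 7 / 1000 := by
  have hquot : |(∫ t in (0:ℝ)..z, t ^ 2 * g t ^ 2) / z ^ 2| ≤ 1 / 100 := by
    refine (abs_integral_div_sq_le (C := (1 / 10) ^ 2) hz.1 fun t ht => ?_).trans ?_
    · rw [abs_mul, abs_pow, abs_pow, abs_of_pos ht.1]
      gcongr
      exacts [ht.1.le, ht.2, hg t ⟨ht.1.le, ht.2⟩]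
    · nlinarith [hz.2]
  have hcube : |z * g z ^ 3| ≤ 1 / 1000 := by
    rw [abs_mul, abs_pow, abs_of_nonneg hz.1]
    calc z * |g z| ^ 3 ≤ 1 * (1 / 10) ^ 3 := by
          gcongr
          exacts [hz.2, hg z ⟨hz.1, le_rfl⟩]
      _ = 1 / 1000 := by norm_num
  calc |fixedPointMap η g z|
      ≤ |-η / 2| + |η| * |(∫ t in (0:ℝ)..z, t ^ 2 * g t ^ 2) / z ^ 2| + |z * g z ^ 3| := by
        rw [← abs_mul]; exact abs_add_three _ _ _
    _ ≤ 1 / 200 + 1 / 100 * (1 / 100) + 1 / 1000 := by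
        have : |-η / 2| ≤ 1 / 200 := by rw [abs_div, abs_neg, abs_two]; linarith
        gcongr
    _ ≤ 7 / 1000 := by norm_num

lemma abs_integral_sub_integral_div_sq_le (hz : z ∈ Icc 0 1)
    (hg : ContinuousOn g (Icc 0 1)) (hh : ContinuousOn h (Icc 0 1))
    (hgb : ∀ t ∈ Icc 0 1, |g t| ≤ 1 / 10) (hhb : ∀ t ∈ Icc 0 1, |h t| ≤ 1 / 10) {d : ℝ}
    (hd : ∀ t ∈ Icc 0 1, |g t - h t| ≤ d) :
    |((∫ t in (0:ℝ)..z, t ^ 2 * g t ^ 2) - ∫ t in (0:ℝ)..z, t ^ 2 * h t ^ 2) / z ^ 2| ≤ d / 5 := by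
  have hsub : uIcc 0 z ⊆ Icc 0 1 := by rw [uIcc_of_le hz.1]; exact Icc_subset_Icc_right hz.2
  have hint : ∀ f : ℝ → ℝ, ContinuousOn f (Icc 0 1) →
      IntervalIntegrable (fun t => t ^ 2 * f t ^ 2) MeasureTheory.volume 0 z :=
    fun f hf => (((continuousOn_id.pow 2).mul (hf.pow 2)).mono hsub).intervalIntegrable
  have hd0 : 0 ≤ d := (abs_nonneg _).trans (hd z hz)
  rw [← intervalIntegral.integral_sub (hint g hg) (hint h hh)]
  refine (abs_integral_div_sq_le (C := d / 5) hz.1 fun t ht => ?_).trans ?_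
  · have ht1 : t ∈ Icc (0:ℝ) 1 := ⟨ht.1.le, ht.2.trans hz.2⟩
    have hsum : |g t + h t| ≤ 1 / 5 :=
      (abs_add_le _ _).trans (by linarith [hgb t ht1, hhb t ht1])
    rw [show t ^ 2 * g t ^ 2 - t ^ 2 * h t ^ 2 = t ^ 2 * ((g t - h t) * (g t + h t)) by ring,
      abs_mul, abs_mul, abs_pow, abs_of_pos ht.1]
    calc t ^ 2 * (|g t - h t| * |g t + h t|) ≤ z ^ 2 * (d * (1 / 5)) := by
          gcongr
          exacts [ht.1.le, ht.2, hd t ht1]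
      _ = z ^ 2 * (d / 5) := by ring
  · nlinarith [hz.2]

lemma abs_fixedPointMap_sub_le (hη : |η| ≤ 1 / 100) (hz : z ∈ Icc 0 1)
    (hg : ContinuousOn g (Icc 0 1)) (hh : ContinuousOn h (Icc 0 1))
    (hgb : ∀ t ∈ Icc 0 1, |g t| ≤ 1 / 10) (hhb : ∀ t ∈ Icc 0 1, |h t| ≤ 1 / 10) {d : ℝ}
    (hd : ∀ t ∈ Icc 0 1, |g t - h t| ≤ d) :
    |fixedPointMap η g z - fixedPointMap η h z| ≤ d / 2 := by
  have hd0 : 0 ≤ d := (abs_nonneg _).trans (hd z hz)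
  have hcube : |z * g z ^ 3 - z * h z ^ 3| ≤ 3 / 100 * d := by
    obtain ⟨hg1, hg2⟩ := abs_le.mp (hgb z hz)
    obtain ⟨hh1, hh2⟩ := abs_le.mp (hhb z hz)
    have hquad : |g z ^ 2 + g z * h z + h z ^ 2| ≤ 3 / 100 :=
      abs_le.mpr ⟨by nlinarith [sq_nonneg (g z + h z)], by nlinarith⟩
    rw [show z * g z ^ 3 - z * h z ^ 3 = z * ((g z - h z) * (g z ^ 2 + g z * h z + h z ^ 2)) by
      ring, abs_mul, abs_mul, abs_of_nonneg hz.1]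
    calc z * (|g z - h z| * |g z ^ 2 + g z * h z + h z ^ 2|) ≤ 1 * (d * (3 / 100)) := by
          gcongr
          exacts [hz.2, hd z hz]
      _ = 3 / 100 * d := by ring
  calc |fixedPointMap η g z - fixedPointMap η h z|
      = |η * (((∫ t in (0:ℝ)..z, t ^ 2 * g t ^ 2) - ∫ t in (0:ℝ)..z, t ^ 2 * h t ^ 2) / z ^ 2)
          + (z * g z ^ 3 - z * h z ^ 3)| := by
        unfold fixedPointMap; ring_nf
    _ ≤ 1 / 100 * (d / 5) + 3 / 100 * d := by
        refine (abs_add_le _ _).trans (add_le_add ?_ hcube)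
        rw [abs_mul]
        gcongr
        exact abs_integral_sub_integral_div_sq_le hz hg hh hgb hhb hd
    _ ≤ d / 2 := by linarith

lemma eqOn_of_eqOn_fixedPointMap (hη : |η| ≤ 1 / 100)
    (hg : ContinuousOn g (Icc 0 1)) (hh : ContinuousOn h (Icc 0 1))
    (hgb : ∀ t ∈ Icc 0 1, |g t| ≤ 1 / 10) (hhb : ∀ t ∈ Icc 0 1, |h t| ≤ 1 / 10)
    (hgfix : EqOn g (fixedPointMap η g) (Icc 0 1)) (hhfix : EqOn h (fixedPointMap η h) (Icc 0 1)) :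
    EqOn g h (Icc 0 1) := by
  obtain ⟨z₀, hz₀, hmax⟩ := isCompact_Icc.exists_isMaxOn (nonempty_Icc.2 zero_le_one)
    (hg.sub hh).abs
  have hmax' : ∀ t ∈ Icc (0:ℝ) 1, |g t - h t| ≤ |g z₀ - h z₀| := isMaxOn_iff.mp hmax
  have hhalf : |g z₀ - h z₀| ≤ |g z₀ - h z₀| / 2 :=
    calc |g z₀ - h z₀| = |fixedPointMap η g z₀ - fixedPointMap η h z₀| := by
          rw [← hgfix hz₀, ← hhfix hz₀]
      _ ≤ |g z₀ - h z₀| / 2 := abs_fixedPointMap_sub_le hη hz₀ hg hh hgb hhb hmax'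
  intro z hz
  have : |g z - h z| ≤ 0 := (hmax' z hz).trans (by linarith [abs_nonneg (g z₀ - h z₀)])
  exact sub_eq_zero.mp (abs_nonpos_iff.mp this)

/-- Continuity argument: `g 0 = -η / 2`, and as long as `g` stays in the ball of radius `1/10`,
`fixedPointMap` sends it into the ball of radius `7/1000`. -/
lemma abs_le_of_eqOn_fixedPointMap (hη : |η| ≤ 1 / 100) (hg : ContinuousOn g (Icc 0 1))
    (hfix : EqOn g (fixedPointMap η g) (Icc 0 1)) : ∀ t ∈ Icc 0 1, |g t| ≤ 1 / 10 := by
  have hclosed : IsClosed ({t | |g t| ≤ 1 / 10} ∩ Icc 0 1) := by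
    rw [inter_comm]
    exact hg.abs.preimage_isClosed_of_isClosed isClosed_Icc isClosed_Iic
  refine IsClosed.Icc_subset_of_forall_mem_nhdsGT_of_Icc_subset hclosed ?_ ?_
  · show |g 0| ≤ 1 / 10
    rw [hfix (left_mem_Icc.2 zero_le_one), fixedPointMap_zero, abs_div, abs_neg, abs_two]
    linarith
  · intro t ht hle
    have htI : t ∈ Icc (0:ℝ) 1 := Ico_subset_Icc_self ht
    have hgt : |g t| < 1 / 10 := by
      rw [hfix htI]
      exact (abs_fixedPointMap_le hη htI hle).trans_lt (by norm_num)
    exact nhdsWithin_le_of_mem (Icc_mem_nhdsGT_of_mem ht)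
      (((hg t htI).abs.eventually_lt_const hgt).mono fun _ => le_of_lt)

lemma exists_eqOn_fixedPointMap (hη : |η| ≤ 1 / 100) :
    ∃ g : ℝ → ℝ, Continuous g ∧ (∀ t ∈ Icc 0 1, |g t| ≤ 1 / 10) ∧
      EqOn g (fixedPointMap η g) (Icc 0 1) := by
  let ext : C(Icc (0:ℝ) 1, ℝ) → ℝ → ℝ := fun f => IccExtend zero_le_one f
  have hext : ∀ f, Continuous (ext f) := fun f => f.continuous.Icc_extend'
  have hext_le : ∀ f f' t, |ext f t - ext f' t| ≤ dist f f' := fun f f' t =>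
    (Real.dist_eq _ _).symm.trans_le (ContinuousMap.dist_apply_le_dist _)
  let T : C(Icc (0:ℝ) 1, ℝ) → C(Icc (0:ℝ) 1, ℝ) := fun f =>
    ⟨(Icc 0 1).domRestrict (fixedPointMap η (ext f)),
      (continuousOn_fixedPointMap (hext f).continuousOn).domRestrict⟩
  let B := Metric.closedBall (0 : C(Icc (0:ℝ) 1, ℝ)) (1 / 10)
  have hB : ∀ f ∈ B, ∀ t, |ext f t| ≤ 1 / 10 := fun f hf t =>
    (Real.norm_eq_abs _).symm.trans_le
      ((f.norm_coe_le_norm _).trans (mem_closedBall_zero_iff.mp hf))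
  have hmaps : MapsTo T B B := fun f hf => by
    refine mem_closedBall_zero_iff.mpr ((ContinuousMap.norm_le _ (by norm_num)).mpr fun t => ?_)
    exact (abs_fixedPointMap_le hη t.2 fun s _ => hB f hf s).trans (by norm_num)
  have hcontr : ContractingWith (1 / 2) (hmaps.restrict T B B) := by
    refine ⟨by norm_num, LipschitzWith.of_dist_le_mul fun f f' => ?_⟩
    refine (ContinuousMap.dist_le (by positivity)).mpr fun t => ?_
    rw [Real.dist_eq]
    refine (abs_fixedPointMap_sub_le hη t.2 (hext _).continuousOn (hext _).continuousOn
      (fun s _ => hB _ f.2 s) (fun s _ => hB _ f'.2 s) fun s _ => hext_le _ _ s).trans_eq ?_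
    simp [Subtype.dist_eq, div_eq_inv_mul]
  obtain ⟨f, hfB, hfix, -⟩ := hcontr.exists_fixedPoint' Metric.isClosed_closedBall.isComplete hmaps
    (Metric.mem_closedBall_self (by norm_num)) (edist_ne_top _ _)
  refine ⟨ext f, hext f, fun t _ => hB f hfB t, fun z hz => ?_⟩
  calc ext f z = f ⟨z, hz⟩ := IccExtend_of_mem _ _ hz
    _ = T f ⟨z, hz⟩ := by rw [hfix]
    _ = fixedPointMap η (ext f) z := rfl

lemma mul_eq_neg_integral_iff (hg : ContinuousOn g (Icc 0 z)) (hz : 0 < z) :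
    (z - (z * g z) ^ 2) * (z * g z) = -η * ∫ t in (0:ℝ)..z, (t - (t * g t) ^ 2) ↔
      g z = fixedPointMap η g z := by
  have hint : ∫ t in (0:ℝ)..z, (t - (t * g t) ^ 2)
      = z ^ 2 / 2 - ∫ t in (0:ℝ)..z, t ^ 2 * g t ^ 2 := by
    simp_rw [mul_pow]
    rw [intervalIntegral.integral_sub intervalIntegral.intervalIntegrable_id, integral_id]
    · ring
    · refine ContinuousOn.intervalIntegrable ?_
      rw [uIcc_of_le hz.le]
      exact (continuousOn_id.pow 2).mul (hg.pow 2)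
  have hfactor :
      (z - (z * g z) ^ 2) * (z * g z) + η * (z ^ 2 / 2 - ∫ t in (0:ℝ)..z, t ^ 2 * g t ^ 2)
        = z ^ 2 * (g z - fixedPointMap η g z) := by
    unfold fixedPointMap
    field_simp
    ring
  rw [hint, ← sub_eq_zero, ← sub_eq_zero (a := g z), sub_eq_add_neg, neg_mul, neg_neg, hfactor]
  simp [hz.ne']

lemma mul_eq_neg_integral_of_eqOn (hg : Continuous g)
    (hfix : EqOn g (fixedPointMap η g) (Icc 0 1)) (hz : z ∈ Icc 0 1) :
    (z - (z * g z) ^ 2) * (z * g z) = -η * ∫ t in (0:ℝ)..z, (t - (t * g t) ^ 2) := by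
  rcases hz.1.eq_or_lt with rfl | hz0
  · simp
  · exact (mul_eq_neg_integral_iff hg.continuousOn hz0).2 (hfix hz)

lemma hasDerivWithinAt_sub_sq_mul_of_eqOn (hg : Continuous g)
    (hfix : EqOn g (fixedPointMap η g) (Icc 0 1)) (hz : z ∈ Icc 0 1) :
    HasDerivWithinAt (fun t => (t - (t * g t) ^ 2) * (t * g t)) (-η * (z - (z * g z) ^ 2))
      (Icc 0 1) z := by
  have hω : Continuous fun t => t - (t * g t) ^ 2 := by fun_prop
  exact ((hω.integral_hasStrictDerivAt 0 z).hasDerivAt.const_mul (-η)).hasDerivWithinAt.congr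
    (fun t ht => mul_eq_neg_integral_of_eqOn hg hfix ht) (mul_eq_neg_integral_of_eqOn hg hfix hz)

lemma one_sub_three_mul_sq_pos {t x : ℝ} (ht : t ∈ Icc (0:ℝ) 1) (hx : |x| ≤ 1 / 10) :
    0 < 1 - 3 * t * x ^ 2 := by
  have : x ^ 2 ≤ 1 / 100 := by nlinarith [abs_nonneg x, sq_abs x]
  nlinarith [ht.1, ht.2, sq_nonneg x]

lemma hasDerivWithinAt_id_mul_of_eqOn (hg : Continuous g)
    (hfix : EqOn g (fixedPointMap η g) (Icc 0 1)) (hb : ∀ t ∈ Icc 0 1, |g t| ≤ 1 / 10)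
    (hz : z ∈ Icc 0 1) :
    HasDerivWithinAt (fun t => t * g t)
      ((-η * (1 - z * g z ^ 2) - g z) / (1 - 3 * z * g z ^ 2)) (Icc 0 1) z := by
  rcases hz.1.eq_or_lt with rfl | hz0
  · have hg0 : g 0 = -η / 2 := by simpa using hfix (left_mem_Icc.2 zero_le_one)
    convert hasDerivWithinAt_id_mul_zero hg.continuousWithinAt using 1
    simp only [zero_mul, sub_zero, mul_zero, div_one]
    rw [hg0]; ring
  · have hpos := one_sub_three_mul_sq_pos hz (hb z hz)
    have hne : z - 3 * (z * g z) ^ 2 ≠ 0 := by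
      rw [show z - 3 * (z * g z) ^ 2 = z * (1 - 3 * z * g z ^ 2) by ring]
      positivity
    convert (hasDerivWithinAt_sub_sq_mul_of_eqOn hg hfix hz).of_sub_sq_mul
      (continuous_id.mul hg).continuousWithinAt hne using 1
    rw [div_eq_div_iff hpos.ne' hne]
    ring

def IsSolution (η : ℝ) (ω ξ : ℝ → ℝ) : Prop :=
  ContDiffOn ℝ 1 ω (Icc 0 1) ∧ ContDiffOn ℝ 1 ξ (Icc 0 1) ∧ ω 0 = 0 ∧ ξ 0 = 0 ∧
    (∀ z ∈ Icc (0:ℝ) 1, ω z = z - ξ z ^ 2) ∧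
    ∀ z ∈ Icc (0:ℝ) 1, HasDerivWithinAt (fun t => ω t * ξ t) (-η * ω z) (Icc 0 1) z

lemma isSolution_of_eqOn_fixedPointMap (hg : Continuous g)
    (hb : ∀ t ∈ Icc 0 1, |g t| ≤ 1 / 10) (hfix : EqOn g (fixedPointMap η g) (Icc 0 1)) :
    IsSolution η (fun z => z - (z * g z) ^ 2) (fun z => z * g z) := by
  have hξ : ContDiffOn ℝ 1 (fun z => z * g z) (Icc 0 1) :=
    contDiffOn_one_of_hasDerivWithinAt (uniqueDiffOn_Icc zero_lt_one)
      (fun z hz => hasDerivWithinAt_id_mul_of_eqOn hg hfix hb hz)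
      (ContinuousOn.div (by fun_prop) (by fun_prop) fun t ht =>
        (one_sub_three_mul_sq_pos ht (hb t ht)).ne')
  exact ⟨contDiffOn_id.sub (hξ.pow 2), hξ, by simp, by simp, fun _ _ => rfl,
    fun z hz => hasDerivWithinAt_sub_sq_mul_of_eqOn hg hfix hz⟩

lemma exists_eqOn_fixedPointMap_of_isSolution {ω ξ : ℝ → ℝ} (h : IsSolution η ω ξ) :
    ∃ g : ℝ → ℝ, ContinuousOn g (Icc 0 1) ∧ EqOn g (fixedPointMap η g) (Icc 0 1) ∧
      (∀ z ∈ Icc 0 1, ω z = z - (z * g z) ^ 2) ∧ ∀ z ∈ Icc 0 1, ξ z = z * g z := by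
  obtain ⟨-, hξc, hω0, hξ0, hω, hder⟩ := h
  obtain ⟨g, hg, hξg⟩ := exists_continuousOn_eq_id_mul hξc.continuousOn
    (hξc.differentiableOn one_ne_zero 0 (left_mem_Icc.2 zero_le_one)) hξ0
  have hωg : ∀ z ∈ Icc (0:ℝ) 1, ω z = z - (z * g z) ^ 2 := fun z hz => by
    rw [hω z hz, hξg z hz]
  have hfix : EqOn g (fixedPointMap η g) (Ioc 0 1) := fun z hz => by
    have hz1 : z ∈ Icc (0:ℝ) 1 := Ioc_subset_Icc_self hz
    have hftc := integral_eq_sub_of_hasDerivWithinAt_Icc hder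
      (continuousOn_const.mul ((by fun_prop : ContinuousOn (fun z => z - (z * g z) ^ 2)
        (Icc 0 1)).congr hωg)) hz1
    rw [intervalIntegral.integral_const_mul, hω0, zero_mul, sub_zero] at hftc
    refine (mul_eq_neg_integral_iff (hg.mono (Icc_subset_Icc_right hz.2)) hz.1).1 ?_
    rw [← hξg z hz1, ← hω z hz1, ← hftc]
    congr 1
    refine intervalIntegral.integral_congr fun t ht => ?_
    rw [uIcc_of_le hz1.1] at ht
    exact hωg t ⟨ht.1, ht.2.trans hz.2⟩
  exact ⟨g, hg, hfix.of_subset_closure hg (continuousOn_fixedPointMap hg) Ioc_subset_Icc_self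
    (closure_Ioc zero_ne_one).ge, hωg, hξg⟩

end ThomasFermi

open ThomasFermi

/-- There exists `η₀ > 0` such that for all `|η| < η₀`, the truncated Thomas–Fermi system
`ω(z) = z - ξ(z)²`, `(ωξ)'(z) = -η ω(z)` on `[0,1]` with `ω(0) = ξ(0) = 0` admits a
unique `C¹` solution, which satisfies `ω(z) > 0` on `(0,1]` and `ω(z) = z + O(z²)` as
`z → 0`. -/
theorem truncated_TF_system_existence_uniqueness :
    ∃ η₀ : ℝ, 0 < η₀ ∧ ∀ η : ℝ, |η| < η₀ →
      ∃ ω ξ : ℝ → ℝ,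
        (ContDiffOn ℝ 1 ω (Icc 0 1) ∧ ContDiffOn ℝ 1 ξ (Icc 0 1) ∧
          ω 0 = 0 ∧ ξ 0 = 0 ∧
          (∀ z ∈ Icc (0:ℝ) 1, ω z = z - ξ z ^ 2) ∧
          (∀ z ∈ Icc (0:ℝ) 1,
            HasDerivWithinAt (fun t => ω t * ξ t) (-η * ω z) (Icc 0 1) z)) ∧
        (∀ z ∈ Ioc (0:ℝ) 1, 0 < ω z) ∧
        (∃ C : ℝ, ∀ z ∈ Icc (0:ℝ) 1, |ω z - z| ≤ C * z ^ 2) ∧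
        (∀ ω' ξ' : ℝ → ℝ,
          (ContDiffOn ℝ 1 ω' (Icc 0 1) ∧ ContDiffOn ℝ 1 ξ' (Icc 0 1) ∧
            ω' 0 = 0 ∧ ξ' 0 = 0 ∧
            (∀ z ∈ Icc (0:ℝ) 1, ω' z = z - ξ' z ^ 2) ∧
            (∀ z ∈ Icc (0:ℝ) 1,
              HasDerivWithinAt (fun t => ω' t * ξ' t) (-η * ω' z) (Icc 0 1) z)) →
          EqOn ω ω' (Icc 0 1) ∧ EqOn ξ ξ' (Icc 0 1)) := by
  refine ⟨1 / 100, by norm_num, fun η hη => ?_⟩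
  obtain ⟨g, hg, hgb, hgfix⟩ := exists_eqOn_fixedPointMap hη.le
  have hsq : ∀ z ∈ Icc (0:ℝ) 1, (z * g z) ^ 2 ≤ z ^ 2 / 100 := fun z hz => by
    have := sq_le_sq' (abs_le.mp (hgb z hz)).1 (abs_le.mp (hgb z hz)).2
    rw [mul_pow]; nlinarith [sq_nonneg z]
  refine ⟨_, _, isSolution_of_eqOn_fixedPointMap hg hgb hgfix, fun z hz => ?_,
    ⟨1 / 100, fun z hz => ?_⟩, fun ω' ξ' hsol => ?_⟩
  · nlinarith [hsq z (Ioc_subset_Icc_self hz), hz.1, hz.2]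
  · rw [sub_sub_cancel_left, abs_neg, abs_of_nonneg (sq_nonneg _)]
    linarith [hsq z hz]
  obtain ⟨g', hg', hg'fix, hω', hξ'⟩ := exists_eqOn_fixedPointMap_of_isSolution hsol
  have hgg' : EqOn g g' (Icc 0 1) := eqOn_of_eqOn_fixedPointMap hη.le hg.continuousOn hg' hgb
    (abs_le_of_eqOn_fixedPointMap hη.le hg' hg'fix) hgfix hg'fix
  exact ⟨fun z hz => by simp only [hω' z hz, hgg' hz],
    fun z hz => by simp only [hξ' z hz, hgg' hz]⟩
end

section
/- Suppose φ is a C² solution of ε²φ'' = (x² - 1 + ξ² + φ²)φ on (-∞,-1] with φ(x) > 0 and φ'(x) > 0 for all sufficiently large negative x, and φ(x) → 0 as x → -∞. Then φ''(x) > 0 on (-∞,-1) and φ(x) > 0 for all x ∈ (-∞,-1]. -/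
open Set Filter

/-- Positivity by convexity: if `φ` solves `ε²φ'' = (x² - 1 + ξ² + φ²)φ` on `(-∞,-1]`,
with `φ > 0` and `φ' > 0` for sufficiently large negative `x` and `φ → 0` as `x → -∞`,
then `φ'' > 0` on `(-∞,-1)` and `φ > 0` on `(-∞,-1]`. -/
theorem positivity_by_convexity (ε : ℝ) (hε : 0 < ε)
    (ξ : ℝ → ℝ) (hξ : Continuous ξ)
    (φ φ' φ'' : ℝ → ℝ)
    (hd1 : ∀ x : ℝ, x ≤ -1 → HasDerivAt φ (φ' x) x)
    (hd2 : ∀ x : ℝ, x ≤ -1 → HasDerivAt φ' (φ'' x) x)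
    (htail : ∃ x₀ : ℝ, x₀ < -1 ∧ ∀ x : ℝ, x ≤ x₀ → 0 < φ x ∧ 0 < φ' x)
    (hlim : Tendsto φ atBot (nhds 0))
    (hode : ∀ x : ℝ, x ≤ -1 →
      ε ^ 2 * φ'' x = (x ^ 2 - 1 + ξ x ^ 2 + φ x ^ 2) * φ x) :
    (∀ x : ℝ, x < -1 → 0 < φ'' x) ∧ ∀ x : ℝ, x ≤ -1 → 0 < φ x := by
  obtain ⟨x₀, hx₀, htail⟩ := htail
  -- From the ODE: if `x < -1` and `φ x > 0`, then `φ'' x > 0`.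
  have hpp : ∀ t : ℝ, t < -1 → 0 < φ t → 0 < φ'' t := by
    intro t ht hφt
    have hode' := hode t ht.le
    have h1 : (1 : ℝ) < t ^ 2 := by nlinarith
    have h2 : 0 < (t ^ 2 - 1 + ξ t ^ 2 + φ t ^ 2) * φ t := by
      have : 0 < t ^ 2 - 1 + ξ t ^ 2 + φ t ^ 2 := by
        nlinarith [sq_nonneg (ξ t), sq_nonneg (φ t)]
      exact mul_pos this hφt
    nlinarith [pow_pos hε 2]
  have key : ∀ x : ℝ, x₀ ≤ x → x ≤ -1 → 0 < φ x ∧ 0 < φ' x := by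
    by_contra hbad
    push_neg at hbad
    set B : Set ℝ := {x | x₀ ≤ x ∧ x ≤ -1 ∧ (φ x ≤ 0 ∨ φ' x ≤ 0)} with hBdef
    have hBne : B.Nonempty := by
      obtain ⟨x, hx1, hx2, hx3⟩ := hbad
      refine ⟨x, hx1, hx2, ?_⟩
      rcases le_or_gt (φ x) 0 with h | h
      · exact Or.inl h
      · exact Or.inr (hx3 h)
    have hbdd : BddBelow B := ⟨x₀, fun b hb => hb.1⟩
    set c : ℝ := sInf B with hcdef
    have hc_ge : x₀ ≤ c := le_csInf hBne fun b hb => hb.1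
    have hc_le : c ≤ -1 := by
      obtain ⟨b, hb⟩ := hBne
      exact le_trans (csInf_le hbdd hb) hb.2.1
    have hgood : ∀ t : ℝ, x₀ ≤ t → t < c → 0 < φ t ∧ 0 < φ' t := by
      intro t h1 h2
      by_contra h
      push_neg at h
      have htB : t ∈ B := by
        refine ⟨h1, le_trans h2.le hc_le, ?_⟩
        rcases le_or_gt (φ t) 0 with h' | h'
        · exact Or.inl h'
        · exact Or.inr (h h')
      exact absurd (csInf_le hbdd htB) (not_le.mpr h2)
    -- φ c > 0 and φ' c > 0
    have hφ'c : 0 < φ' c ∧ 0 < φ c := by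
      rcases eq_or_lt_of_le hc_ge with heq | hlt
      · have := htail x₀ le_rfl
        rw [← heq]
        exact ⟨this.2, this.1⟩
      · have hmono' : StrictMonoOn φ' (Icc x₀ c) := by
          apply strictMonoOn_of_deriv_pos (convex_Icc _ _)
          · intro t ht
            exact (hd2 t (ht.2.trans hc_le)).continuousAt.continuousWithinAt
          · intro t ht
            rw [interior_Icc] at ht
            rw [(hd2 t (ht.2.le.trans hc_le)).deriv]
            exact hpp t (lt_of_lt_of_le ht.2 hc_le) (hgood t ht.1.le ht.2).1
        have hmono : StrictMonoOn φ (Icc x₀ c) := by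
          apply strictMonoOn_of_deriv_pos (convex_Icc _ _)
          · intro t ht
            exact (hd1 t (ht.2.trans hc_le)).continuousAt.continuousWithinAt
          · intro t ht
            rw [interior_Icc] at ht
            rw [(hd1 t (ht.2.le.trans hc_le)).deriv]
            exact (hgood t ht.1.le ht.2).2
        have hm1 := hmono' ⟨le_rfl, hlt.le⟩ ⟨hlt.le, le_rfl⟩ hlt
        have hm2 := hmono ⟨le_rfl, hlt.le⟩ ⟨hlt.le, le_rfl⟩ hlt
        have h0 := htail x₀ le_rfl
        exact ⟨lt_trans h0.2 hm1, lt_trans h0.1 hm2⟩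
    -- continuity yields a neighborhood of good points, contradicting sInf
    have hev : ∀ᶠ x in nhds c, 0 < φ x ∧ 0 < φ' x := by
      have e1 : ∀ᶠ x in nhds c, 0 < φ x :=
        (hd1 c hc_le).continuousAt.eventually (eventually_gt_nhds hφ'c.2)
      have e2 : ∀ᶠ x in nhds c, 0 < φ' x :=
        (hd2 c hc_le).continuousAt.eventually (eventually_gt_nhds hφ'c.1)
      exact e1.and e2
    rw [Metric.eventually_nhds_iff] at hev
    obtain ⟨δ, hδ, hball⟩ := hev
    obtain ⟨b, hbB, hblt⟩ := exists_lt_of_csInf_lt hBne (lt_add_of_pos_right c hδ)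
    have hcb : c ≤ b := csInf_le hbdd hbB
    have hdist : dist b c < δ := by
      rw [Real.dist_eq, abs_lt]
      constructor <;> linarith
    have := hball hdist
    rcases hbB.2.2 with h | h
    · exact absurd this.1 (not_lt.mpr h)
    · exact absurd this.2 (not_lt.mpr h)
  have hφpos : ∀ x : ℝ, x ≤ -1 → 0 < φ x := by
    intro x hx
    rcases le_or_gt x x₀ with h | h
    · exact (htail x h).1
    · exact (key x h.le hx).1
  exact ⟨fun x hx => hpp x hx (hφpos x hx.le), hφpos⟩
end

section
/- The potential W₀(y) := 3ν₀(y)² - y, where ν₀ is the Hastings–McLeod solution of the Painlevé-II equation 4ν'' + yν - ν³ = 0, is bounded below by a positive constant: there exists W_min > 0 such that W₀(y) ≥ W_min for all y ∈ ℝ. -/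
open Filter
open scoped ContDiff

namespace W0aux

variable {f : ℝ → ℝ}

lemma diffs (h : ContDiff ℝ (⊤ : ℕ∞) f) :
    Differentiable ℝ f ∧ Differentiable ℝ (deriv f) := by
  have h1 : ContDiff ℝ ∞ f := h.of_le (by simp)
  have h2 := (contDiff_infty_iff_deriv.mp h1).2
  exact ⟨(contDiff_infty_iff_deriv.mp h1).1, (contDiff_infty_iff_deriv.mp h2).1⟩

lemma hd2 (hf' : Differentiable ℝ (deriv f))
    (hode' : ∀ y, deriv (deriv f) y = (f y ^ 3 - y * f y) / 4) (x : ℝ) :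
    HasDerivAt (deriv f) ((f x ^ 3 - x * f x) / 4) x := by
  have := (hf' x).hasDerivAt
  rwa [hode' x] at this

lemma hd3 (hf : Differentiable ℝ f)
    (hode' : ∀ y, deriv (deriv f) y = (f y ^ 3 - y * f y) / 4) (p : ℝ) :
    HasDerivAt (deriv (deriv f))
      ((3 * f p ^ 2 * deriv f p - (f p + p * deriv f p)) / 4) p := by
  have heq : deriv (deriv f) = fun y => (f y ^ 3 - y * f y) / 4 := funext hode'
  rw [heq]
  have h1 : HasDerivAt (fun y => f y ^ 3) (3 * f p ^ 2 * deriv f p) p := by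
    simpa [mul_comm, mul_assoc] using ((hf p).hasDerivAt.fun_pow 3)
  have h2 : HasDerivAt (fun y => y * f y) (1 * f p + p * deriv f p) p :=
    (hasDerivAt_id p).mul (hf p).hasDerivAt
  simpa [one_mul] using (h1.sub h2).div_const 4



lemma deriv_nonneg_of_monotone {f : ℝ → ℝ} (hf : Differentiable ℝ f) (hm : Monotone f) (x : ℝ) :
    0 ≤ deriv f x := by
  have h := (hf x).hasDerivAt
  rw [hasDerivAt_iff_tendsto_slope] at h
  have h2 : Tendsto (slope f x) (nhdsWithin x (Set.Ioi x)) (nhds (deriv f x)) :=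
    h.mono_left (nhdsWithin_mono x (by intro t ht; exact ne_of_gt ht))
  refine ge_of_tendsto h2 ?_
  filter_upwards [self_mem_nhdsWithin] with t ht
  have : x < t := ht
  rw [slope_def_field]
  exact div_nonneg (by linarith [hm this.le]) (by linarith)

/-- If `ψ' = φ`, `φ p = 0` and `φ' p < 0`, then `ψ` takes values below `ψ p` just right of `p`. -/
lemma exists_right_lt {ψ φ : ℝ → ℝ} (hψ : ∀ x, HasDerivAt ψ (φ x) x)
    {p c : ℝ} (hφp : φ p = 0) (hd : HasDerivAt φ c p) (hc : c < 0) :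
    ∃ t, p < t ∧ ψ t < ψ p := by
  rw [hasDerivAt_iff_tendsto_slope] at hd
  have h2 : Tendsto (slope φ p) (nhdsWithin p (Set.Ioi p)) (nhds c) :=
    hd.mono_left (nhdsWithin_mono p (by intro t ht; exact ne_of_gt ht))
  have hev : ∀ᶠ t in nhdsWithin p (Set.Ioi p), slope φ p t < 0 :=
    h2.eventually_lt_const hc
  -- extract an interval
  obtain ⟨b, hb, hball⟩ := (nhdsGT_basis p).eventually_iff.mp hev
  set q := (p + b)/2 with hq
  have hpq : p < q := by simp [hq]; linarith
  have hqb : q < b := by simp [hq]; linarith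
  have hneg : ∀ t ∈ Set.Ioo p q, φ t < 0 := by
    intro t ht
    have hs := hball ⟨ht.1, lt_trans ht.2 hqb⟩
    rw [slope_def_field, hφp, sub_zero] at hs
    have htp : 0 < t - p := by linarith [ht.1]
    rcases div_neg_iff.mp hs with h | h
    · linarith [h.1, h.2]
    · exact h.1
  have hanti : StrictAntiOn ψ (Set.Icc p q) := by
    apply strictAntiOn_of_deriv_neg (convex_Icc p q)
    · exact fun x _ => ((hψ x).continuousAt).continuousWithinAt
    · intro x hx
      rw [interior_Icc] at hx
      rw [(hψ x).deriv]
      exact hneg x ⟨hx.1, hx.2⟩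
  exact ⟨q, hpq, hanti (Set.left_mem_Icc.mpr hpq.le) (Set.right_mem_Icc.mpr hpq.le) hpq⟩


lemma deriv_pos (hf : Differentiable ℝ f) (hf' : Differentiable ℝ (deriv f))
    (hode' : ∀ y, deriv (deriv f) y = (f y ^ 3 - y * f y) / 4)
    (hpos : ∀ y, 0 < f y) (hge : ∀ y, 0 ≤ deriv f y) (p : ℝ) : 0 < deriv f p := by
  rcases lt_or_eq_of_le (hge p) with h | h
  · exact h
  exfalso
  have hmin : IsLocalMin (deriv f) p := by
    apply Filter.Eventually.of_forall
    intro y; rw [← h]; exact hge y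
  have h2 : deriv (deriv f) p = 0 := hmin.deriv_eq_zero
  have h3 : f p ^ 2 = p := by
    have := hode' p
    rw [h2] at this
    have hfp := hpos p
    have : f p * (f p ^ 2 - p) = 0 := by nlinarith [this]
    rcases mul_eq_zero.mp this with h4 | h4
    · exact absurd h4 (ne_of_gt hfp)
    · linarith
  have hc : HasDerivAt (deriv (deriv f)) (-(f p) / 4) p := by
    have := hd3 hf hode' p
    rw [← h] at this
    simpa using this
  obtain ⟨t, _, hlt⟩ := exists_right_lt (fun x => (hf' x).hasDerivAt) h2 hc
    (by have := hpos p; linarith)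
  rw [← h] at hlt
  exact absurd (hge t) (by linarith)


/-- Exponential decay of `f` and `f'` at `-∞`. -/
lemma decay (hf : Differentiable ℝ f) (hf' : Differentiable ℝ (deriv f))
    (hode' : ∀ y, deriv (deriv f) y = (f y ^ 3 - y * f y) / 4)
    (hpos : ∀ y, 0 < f y) (hge : ∀ y, 0 ≤ deriv f y) :
    ∃ K, 0 < K ∧ ∀ y ≤ (-1:ℝ),
      f y ≤ K * Real.exp (y/2) ∧ deriv f y ≤ K * Real.exp (y/2) := by
  set W : ℝ → ℝ := fun y => deriv f y + f y / 2 with hW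
  set E : ℝ → ℝ := fun y => Real.exp (-(y/2)) * W y with hEdef
  have hWd : ∀ x, HasDerivAt W ((f x ^ 3 - x * f x) / 4 + deriv f x / 2) x := by
    intro x
    exact (hd2 hf' hode' x).add (((hf x).hasDerivAt).div_const 2)
  have hexp : ∀ x : ℝ, HasDerivAt (fun y : ℝ => Real.exp (-(y/2)))
      (Real.exp (-(x/2)) * (-(1/2))) x := by
    intro x
    have h1 : HasDerivAt (fun y : ℝ => -(y/2)) (-(1/2)) x := by
      simpa using ((hasDerivAt_id x).div_const 2).fun_neg
    exact h1.exp
  have hE : ∀ x, HasDerivAt E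
      (Real.exp (-(x/2)) * (-(1/2)) * W x
        + Real.exp (-(x/2)) * ((f x ^ 3 - x * f x) / 4 + deriv f x / 2)) x := by
    intro x
    exact (hexp x).mul (hWd x)
  have hEnonneg : ∀ x ∈ Set.Iio (-1:ℝ), 0 ≤ deriv E x := by
    intro x hx
    rw [(hE x).deriv]
    have hx1 : x < -1 := hx
    have h1 : 0 < Real.exp (-(x/2)) := Real.exp_pos _
    have h2 : 0 < f x := hpos x
    have key : Real.exp (-(x/2)) * (-(1/2)) * W x
        + Real.exp (-(x/2)) * ((f x ^ 3 - x * f x) / 4 + deriv f x / 2)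
        = Real.exp (-(x/2)) * (f x * (f x ^ 2 - x - 1) / 4) := by
      simp only [hW]; ring
    rw [key]
    have h3 : 0 ≤ f x * (f x ^ 2 - x - 1) / 4 := by nlinarith
    positivity
  have hEmono : MonotoneOn E (Set.Iic (-1:ℝ)) := by
    apply monotoneOn_of_deriv_nonneg (convex_Iic _)
    · exact Continuous.continuousOn (by simp only [hEdef, hW]; have := hf.continuous; have := hf'.continuous; fun_prop)
    · intro x hx
      exact ((hE x).differentiableAt).differentiableWithinAt
    · intro x hx
      rw [interior_Iic] at hx
      exact hEnonneg x hx
  have hWpos : ∀ y, 0 < W y := fun y => by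
    simp only [hW]; linarith [hge y, hpos y]
  refine ⟨2 * Real.exp (1/2) * W (-1), by have := hWpos (-1); positivity, ?_⟩
  intro y hy
  have hE1 : E y ≤ E (-1) := hEmono (Set.mem_Iic.mpr hy) (Set.mem_Iic.mpr le_rfl) hy
  have hEy : E y = Real.exp (-(y/2)) * W y := rfl
  have hval : E (-1) = Real.exp (1/2) * W (-1) := by
    simp only [hEdef]; norm_num
  have hkey : W y ≤ Real.exp (1/2) * W (-1) * Real.exp (y/2) := by
    have h5 : 0 < Real.exp (y/2) := Real.exp_pos _
    have h6 := hE1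
    rw [hEy, hval] at h6
    have h7 : Real.exp (-(y/2)) * Real.exp (y/2) = 1 := by
      rw [← Real.exp_add]; norm_num
    have h11 : W y = Real.exp (y/2) * (Real.exp (-(y/2)) * W y) := by
      rw [← mul_assoc, mul_comm (Real.exp (y/2)), h7, one_mul]
    rw [h11]
    have h12 := mul_le_mul_of_nonneg_left h6 h5.le
    nlinarith [h12]
  constructor
  · have : f y ≤ 2 * W y := by have := hge y; simp only [hW]; linarith
    calc f y ≤ 2 * W y := this
    _ ≤ 2 * (Real.exp (1/2) * W (-1) * Real.exp (y/2)) := by linarith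
    _ = 2 * Real.exp (1/2) * W (-1) * Real.exp (y/2) := by ring
  · have h8 : deriv f y ≤ W y := by have := (hpos y).le; simp only [hW]; linarith
    have h9 : (0:ℝ) < Real.exp (1/2) * W (-1) :=
      mul_pos (Real.exp_pos _) (hWpos (-1))
    have h10 : 0 < Real.exp (y/2) := Real.exp_pos _
    have h11 : (0:ℝ) < Real.exp (1/2) * W (-1) * Real.exp (y/2) := mul_pos h9 h10
    calc deriv f y ≤ W y := h8
    _ ≤ Real.exp (1/2) * W (-1) * Real.exp (y/2) := hkey
    _ ≤ 2 * Real.exp (1/2) * W (-1) * Real.exp (y/2) := by nlinarith [h11]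


/-- The energy functional. -/
noncomputable def Ffun (f : ℝ → ℝ) : ℝ → ℝ :=
  fun t => 2 * (deriv f t)^2 + (t^2 - ((f t)^2 - t)^2)/4

lemma hFd (hf : Differentiable ℝ f) (hf' : Differentiable ℝ (deriv f))
    (hode' : ∀ y, deriv (deriv f) y = (f y ^ 3 - y * f y) / 4) (t : ℝ) :
    HasDerivAt (Ffun f) ((f t)^2 / 2) t := by
  have h1 : HasDerivAt (fun y => 2 * (deriv f y)^2)
      (2 * (2 * deriv f t ^ 1 * ((f t ^ 3 - t * f t) / 4))) t :=
    ((hd2 hf' hode' t).pow 2).const_mul 2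
  have h2 : HasDerivAt (fun y : ℝ => y^2) (2 * t ^ 1) t := by
    simpa using hasDerivAt_pow 2 t
  have h3i : HasDerivAt (fun y => (f y)^2 - y) (2 * f t ^ 1 * deriv f t - 1) t :=
    ((hf t).hasDerivAt.pow 2).sub (hasDerivAt_id t)
  have h3 : HasDerivAt (fun y => ((f y)^2 - y)^2)
      (2 * ((f t)^2 - t) ^ 1 * (2 * f t ^ 1 * deriv f t - 1)) t := h3i.pow 2
  have h4 := (h1.add ((h2.sub h3).div_const 4))
  have : (2 * (2 * deriv f t ^ 1 * ((f t ^ 3 - t * f t) / 4)) +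
      (2 * t ^ 1 - 2 * ((f t)^2 - t) ^ 1 * (2 * f t ^ 1 * deriv f t - 1)) / 4)
      = (f t)^2 / 2 := by ring
  rw [this] at h4
  exact h4

lemma hFmono (hf : Differentiable ℝ f) (hf' : Differentiable ℝ (deriv f))
    (hode' : ∀ y, deriv (deriv f) y = (f y ^ 3 - y * f y) / 4)
    (hpos : ∀ y, 0 < f y) : StrictMono (Ffun f) := by
  apply strictMono_of_deriv_pos
  intro x
  rw [(hFd hf hf' hode' x).deriv]
  have := hpos x
  positivity

lemma hFbot (hf : Differentiable ℝ f) (hf' : Differentiable ℝ (deriv f))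
    (hode' : ∀ y, deriv (deriv f) y = (f y ^ 3 - y * f y) / 4)
    (hpos : ∀ y, 0 < f y) (hge : ∀ y, 0 ≤ deriv f y) :
    Tendsto (Ffun f) atBot (nhds 0) := by
  obtain ⟨K, hK, hdec⟩ := decay hf hf' hode' hpos hge
  set B : ℝ → ℝ := fun y =>
    2*K^2*Real.exp (y/2)^2 + (-y)*(K^2*Real.exp (y/2)^2)/2 + K^4*Real.exp (y/2)^4/4 with hB
  have hexp2 : ∀ y : ℝ, Real.exp (y/2)^2 = Real.exp y := by
    intro y
    rw [sq, ← Real.exp_add]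
    norm_num
  have T1 : Tendsto (fun y : ℝ => Real.exp (y/2)) atBot (nhds 0) := by
    apply Real.tendsto_exp_atBot.comp
    exact Tendsto.atBot_div_const (by norm_num) tendsto_id
  have T2 : Tendsto (fun y : ℝ => (-y) * (K^2*Real.exp (y/2)^2)) atBot (nhds 0) := by
    have base : Tendsto (fun y : ℝ => -(y * Real.exp y)) atBot (nhds 0) := by
      have h0 := Real.tendsto_pow_mul_exp_neg_atTop_nhds_zero 1
      have h1 := h0.comp tendsto_neg_atBot_atTop
      have h2 : ((fun x : ℝ => x ^ 1 * Real.exp (-x)) ∘ Neg.neg)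
          = fun y : ℝ => -(y * Real.exp y) := by
        funext y; simp [Function.comp]
      rwa [h2] at h1
    have : (fun y : ℝ => (-y) * (K^2*Real.exp (y/2)^2))
        = fun y : ℝ => K^2 * (-(y * Real.exp y)) := by
      funext y; rw [hexp2]; ring
    rw [this]
    simpa using base.const_mul (K^2)
  have TB : Tendsto B atBot (nhds 0) := by
    have TA : Tendsto (fun y : ℝ => 2*K^2*Real.exp (y/2)^2) atBot (nhds 0) := by
      have := (T1.mul T1).const_mul (2*K^2)
      simpa [sq, mul_assoc] using this
    have TC : Tendsto (fun y : ℝ => K^4*Real.exp (y/2)^4/4) atBot (nhds 0) := by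
      have h4 : Tendsto (fun y : ℝ => Real.exp (y/2)^4) atBot (nhds 0) := by
        have := ((T1.mul T1).mul (T1.mul T1))
        simpa [pow_succ, pow_zero, one_mul, mul_assoc] using this
      have := (h4.const_mul (K^4)).div_const 4
      simpa [mul_comm, mul_div_assoc] using this
    have := (TA.add ((T2.div_const 2))).add TC
    simpa [hB, add_assoc, mul_div_assoc] using this
  apply squeeze_zero_norm' _ TB
  filter_upwards [eventually_le_atBot (-1:ℝ)] with y hy
  obtain ⟨hfy, hfy'⟩ := hdec y hy
  have h0 : 0 < f y := hpos y
  have h1 : 0 ≤ deriv f y := hge y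
  have hEpos : 0 < Real.exp (y/2) := Real.exp_pos _
  have hyneg : 0 ≤ -y := by linarith
  have hF : Ffun f y = 2*(deriv f y)^2 + y*(f y)^2/2 - (f y)^4/4 := by
    simp only [Ffun]; ring
  rw [Real.norm_eq_abs, abs_le]
  constructor
  · rw [hF]; simp only [hB]
    nlinarith [sq_nonneg (deriv f y), sq_nonneg (f y), mul_le_mul hfy hfy h0.le (by positivity),
      mul_le_mul hfy' hfy' h1 (by positivity),
      mul_le_mul_of_nonneg_left (mul_le_mul hfy hfy h0.le (by positivity)) hyneg,
      pow_le_pow_left₀ h0.le hfy 4]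
  · rw [hF]; simp only [hB]
    nlinarith [sq_nonneg (f y), pow_pos h0 4, sq_nonneg (deriv f y),
      mul_le_mul hfy' hfy' h1 (by positivity),
      mul_le_mul_of_nonneg_left (mul_le_mul hfy hfy h0.le (by positivity)) hyneg,
      pow_le_pow_left₀ h0.le hfy 4, pow_pos hEpos 2, pow_pos hEpos 4]

lemma hFpos (hf : Differentiable ℝ f) (hf' : Differentiable ℝ (deriv f))
    (hode' : ∀ y, deriv (deriv f) y = (f y ^ 3 - y * f y) / 4)
    (hpos : ∀ y, 0 < f y) (hge : ∀ y, 0 ≤ deriv f y) (t : ℝ) :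
    0 < Ffun f t := by
  have hmono := hFmono hf hf' hode' hpos
  have h1 : (0:ℝ) ≤ Ffun f (t - 1) := by
    apply le_of_tendsto (hFbot hf hf' hode' hpos hge)
    filter_upwards [eventually_le_atBot (t - 1)] with s hs
    exact hmono.monotone hs
  have h2 : Ffun f (t-1) < Ffun f t := hmono (by linarith)
  linarith


/-- Sharpened decay: `f'` dominates `f/2` far to the left. -/
lemma sharp (hf : Differentiable ℝ f) (hf' : Differentiable ℝ (deriv f))
    (hode' : ∀ y, deriv (deriv f) y = (f y ^ 3 - y * f y) / 4)
    (hpos : ∀ y, 0 < f y) (hge : ∀ y, 0 ≤ deriv f y) :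
    ∀ t ≤ (-1:ℝ), f t / 2 < deriv f t := by
  intro t ht
  have hF := hFpos hf hf' hode' hpos hge t
  have h0 : 0 < f t := hpos t
  have h1 : 0 ≤ deriv f t := hge t
  have key : (f t)^2 / 4 < (deriv f t)^2 := by
    simp only [Ffun] at hF
    nlinarith [hF, sq_nonneg (f t), pow_pos h0 2, pow_pos h0 4]
  nlinarith [key, h0, h1]

/-- Decay of `f²` with rate `1` to the left of `-1`. -/
lemma sqdecay (hf : Differentiable ℝ f) (hf' : Differentiable ℝ (deriv f))
    (hode' : ∀ y, deriv (deriv f) y = (f y ^ 3 - y * f y) / 4)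
    (hpos : ∀ y, 0 < f y) (hge : ∀ y, 0 ≤ deriv f y) :
    ∀ T ≤ (-1:ℝ), (f T)^2 ≤ (f (-1))^2 * Real.exp (T + 1) := by
  intro T hT
  set D : ℝ → ℝ := fun t => (f t)^2 * Real.exp (-t) with hD
  have hDd : ∀ x, HasDerivAt D
      ((2 * f x ^ 1 * deriv f x) * Real.exp (-x) + (f x)^2 * (Real.exp (-x) * (-1))) x := by
    intro x
    exact ((hf x).hasDerivAt.pow 2).mul (((hasDerivAt_id x).neg).exp)
  have hmonoD : MonotoneOn D (Set.Iic (-1:ℝ)) := by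
    apply monotoneOn_of_deriv_nonneg (convex_Iic _)
    · exact Continuous.continuousOn (by simp only [hD]; have := hf.continuous; fun_prop)
    · intro x hx; exact (hDd x).differentiableAt.differentiableWithinAt
    · intro x hx
      rw [interior_Iic] at hx
      rw [(hDd x).deriv]
      have hs := sharp hf hf' hode' hpos hge x (le_of_lt hx)
      have h0 : 0 < f x := hpos x
      have he : 0 < Real.exp (-x) := Real.exp_pos _
      nlinarith [mul_pos (mul_pos h0 he) (show (0:ℝ) < deriv f x - f x/2 by linarith)]
  have := hmonoD (Set.mem_Iic.mpr hT) (Set.mem_Iic.mpr le_rfl) hT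
  simp only [hD] at this
  have he1 : 0 < Real.exp (-T) := Real.exp_pos _
  have he2 : Real.exp (-(-1:ℝ)) = Real.exp 1 := by norm_num
  rw [he2] at this
  have hexp : Real.exp (T+1) * Real.exp (-T) = Real.exp 1 := by
    rw [← Real.exp_add]; ring_nf
  nlinarith [this, he1, hexp, sq_nonneg (f T), Real.exp_pos (T+1), sq_nonneg (f (-1))]

/-- The key left-tail bound `F(0) ≤ f(0)²`. -/
lemma F0_le (hf : Differentiable ℝ f) (hf' : Differentiable ℝ (deriv f))
    (hode' : ∀ y, deriv (deriv f) y = (f y ^ 3 - y * f y) / 4)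
    (hpos : ∀ y, 0 < f y) (hge : ∀ y, 0 ≤ deriv f y) (hmono : Monotone f) :
    Ffun f 0 ≤ (f 0)^2 := by
  have hcont : Continuous f := hf.continuous
  have hint : ∀ a b : ℝ, IntervalIntegrable (fun t => (f t)^2/2) MeasureTheory.volume a b :=
    fun a b => (Continuous.intervalIntegrable (by fun_prop) a b)
  have key : ∀ T ≤ (-1:ℝ), Ffun f 0 ≤ Ffun f T + (f 0)^2 := by
    intro T hT
    have hftc : ∫ t in T..0, (f t)^2/2 = Ffun f 0 - Ffun f T := by
      apply intervalIntegral.integral_eq_sub_of_hasDerivAt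
      · exact fun x _ => hFd hf hf' hode' x
      · exact hint T 0
    have hsplit : ∫ t in T..0, (f t)^2/2
        = (∫ t in T..(-1:ℝ), (f t)^2/2) + ∫ t in (-1:ℝ)..0, (f t)^2/2 :=
      (intervalIntegral.integral_add_adjacent_intervals (hint T (-1)) (hint (-1) 0)).symm
    have hb2 : ∫ t in (-1:ℝ)..0, (f t)^2/2 ≤ (f 0)^2/2 := by
      have : ∫ t in (-1:ℝ)..0, (f t)^2/2 ≤ ∫ t in (-1:ℝ)..0, (f 0)^2/2 := by
        apply intervalIntegral.integral_mono_on (by norm_num) (hint (-1) 0)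
          (Continuous.intervalIntegrable (by fun_prop) _ _)
        intro x hx
        have : f x ≤ f 0 := hmono hx.2
        have h0 : 0 < f x := hpos x
        nlinarith
      simpa using this
    have hb1 : ∫ t in T..(-1:ℝ), (f t)^2/2 ≤ (f 0)^2/2 := by
      have hle : ∫ t in T..(-1:ℝ), (f t)^2/2
          ≤ ∫ t in T..(-1:ℝ), (f (-1))^2 * Real.exp (t+1) / 2 := by
        apply intervalIntegral.integral_mono_on hT (hint T (-1))
          (Continuous.intervalIntegrable (by fun_prop) _ _)
        intro x hx
        have := sqdecay hf hf' hode' hpos hge x hx.2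
        linarith
      have hrw : (fun t:ℝ => (f (-1))^2 * Real.exp (t+1) / 2)
          = fun t:ℝ => ((f (-1))^2 * Real.exp 1 / 2) * Real.exp t := by
        funext t; rw [Real.exp_add]; ring
      rw [hrw] at hle
      rw [intervalIntegral.integral_const_mul, integral_exp] at hle
      have hmon : f (-1) ≤ f 0 := hmono (by norm_num)
      have h1 : 0 < f (-1) := hpos (-1)
      have h2 : 0 < Real.exp T := Real.exp_pos _
      have h3 : Real.exp 1 * Real.exp (-1) = 1 := by
        rw [← Real.exp_add]; norm_num
      have h4 : 0 < Real.exp 1 := Real.exp_pos _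
      nlinarith [hle, h2, h3, h4, sq_nonneg (f (-1)), mul_pos (pow_pos h1 2) (mul_pos h4 h2)]
    linarith [hftc, hsplit, hb1, hb2]
  have : Ffun f 0 - (f 0)^2 ≤ 0 := by
    apply ge_of_tendsto (hFbot hf hf' hode' hpos hge)
    filter_upwards [eventually_le_atBot (-1:ℝ)] with T hT
    linarith [key T hT]
  linarith


/-- Existence of a global minimum of `g y = 3 f y ^ 2 - y`. -/
lemma exists_min (hf : Differentiable ℝ f) (hpos : ∀ y, 0 < f y)
    (htop : Tendsto (fun y => f y / Real.sqrt y) atTop (nhds 1)) :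
    ∃ p, ∀ y, 3*(f p)^2 - p ≤ 3*(f y)^2 - y := by
  set g : ℝ → ℝ := fun y => 3*(f y)^2 - y with hg
  have hgc : Continuous g := by simp only [hg]; have := hf.continuous; fun_prop
  have hev : ∀ᶠ y in atTop, (4:ℝ)/5 ≤ f y / Real.sqrt y :=
    htop.eventually_const_le (by norm_num)
  obtain ⟨Y, hY⟩ := eventually_atTop.mp hev
  set M : ℝ := 3*(f 0)^2 with hM
  have hM0 : 0 < M := by have := hpos 0; positivity
  set R : ℝ := max (max Y 1) (25*(M+1)/23) with hR
  have hgrow : ∀ y, R < y → M + 1 ≤ g y := by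
    intro y hy
    have hy1 : (1:ℝ) ≤ y := le_trans (le_trans (le_max_right Y 1) (le_max_left _ _)) hy.le
    have hyY : Y ≤ y := le_trans (le_trans (le_max_left Y 1) (le_max_left _ _)) hy.le
    have hsq : Real.sqrt y ^ 2 = y := Real.sq_sqrt (by linarith)
    have hsqpos : 0 < Real.sqrt y := Real.sqrt_pos.mpr (by linarith)
    have h45 := hY y hyY
    have hfy : (4:ℝ)/5 * Real.sqrt y ≤ f y := by
      rw [le_div_iff₀ hsqpos] at h45
      linarith [h45]
    have hfy2 : 16/25 * y ≤ (f y)^2 := by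
      have h0 : (0:ℝ) ≤ 4/5 * Real.sqrt y := by positivity
      nlinarith [mul_le_mul hfy hfy h0 (le_trans h0 hfy), hsq]
    have hgy : 23/25 * y ≤ g y := by
      simp only [hg]
      nlinarith [hfy2]
    have hyR : 25*(M+1)/23 ≤ y := le_trans (le_max_right _ _) hy.le
    have h23 : (23:ℝ)/25 * (25*(M+1)/23) ≤ 23/25 * y :=
      mul_le_mul_of_nonneg_left hyR (by norm_num)
    calc M + 1 = 23/25*(25*(M+1)/23) := by ring
    _ ≤ 23/25*y := h23
    _ ≤ g y := hgy
  set L : ℝ := -(M+1) with hL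
  have hLR : L ≤ R := by
    have h1 : (1:ℝ) ≤ R := le_trans (le_max_right Y 1) (le_max_left _ _)
    simp only [hL]; linarith
  obtain ⟨p, hpmem, hpmin⟩ :=
    (isCompact_Icc (a := L) (b := R)).exists_isMinOn (Set.nonempty_Icc.mpr hLR)
      (hgc.continuousOn)
  refine ⟨p, fun y => ?_⟩
  have h1R : (1:ℝ) ≤ R := le_trans (le_max_right Y 1) (le_max_left _ _)
  have h0mem : (0:ℝ) ∈ Set.Icc L R := by
    constructor
    · simp only [hL]; linarith
    · linarith
  by_cases hy : y ∈ Set.Icc L R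
  · exact hpmin hy
  · have hg0 : g p ≤ g 0 := hpmin h0mem
    have hg0' : g 0 = M := by simp only [hg, hM]; ring
    rw [Set.mem_Icc] at hy
    push_neg at hy
    rcases le_or_gt L y with h1 | h1
    · have h2 := hy h1
      have := hgrow y h2
      calc g p ≤ M := by rw [← hg0']; exact hg0
      _ ≤ g y := by linarith
    · have : M + 1 ≤ g y := by
        have : 0 < f y := hpos y
        simp only [hg, hL] at *
        nlinarith [this, h1, sq_nonneg (f y)]
      calc g p ≤ M := by rw [← hg0']; exact hg0
      _ ≤ g y := by linarith

/-- The final numerical inequality. -/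
lemma poly (s x : ℝ) (hs : 0 < s) (h18 : s^3 ≤ 1/18) (hx0 : 0 < x) (hx4 : x ≤ 4*s) :
    x^2*(6 + 3*s - x) + 108*s^2*x < 12 + 486*s^3 := by
  have hsc : s ≤ 477/1250 := by
    by_contra hc
    push_neg at hc
    have : (477/1250:ℝ)^3 < s^3 := by
      apply pow_lt_pow_left₀ hc (by norm_num)
      norm_num
    norm_num at this
    linarith
  have step1 : 48*s^2 < 6 + 35*s^3 := by
    have hcs : (0:ℝ) ≤ 477/1250 - s := by linarith
    have hb : (0:ℝ) ≤ 48*(477/1250 + s) - 35*((477/1250)^2 + (477/1250)*s + s^2) := by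
      nlinarith [hs.le, hsc, sq_nonneg s]
    nlinarith [mul_nonneg hcs hb]
  have hbr : (0:ℝ) ≤ (6 + 3*s)*(4*s + x) - (16*s^2 + 4*s*x + x^2) + 108*s^2 := by
    nlinarith [hx0.le, hx4, hs.le, hsc]
  have hmon : x^2*(6 + 3*s - x) + 108*s^2*x ≤ 96*s^2 + 416*s^3 := by
    nlinarith [mul_nonneg (by linarith : (0:ℝ) ≤ 4*s - x) hbr]
  nlinarith [hmon, step1]


set_option maxHeartbeats 1000000 in
lemma main_contra (hf : Differentiable ℝ f) (hf' : Differentiable ℝ (deriv f))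
    (hode' : ∀ y, deriv (deriv f) y = (f y ^ 3 - y * f y) / 4)
    (hpos : ∀ y, 0 < f y) (hge : ∀ y, 0 ≤ deriv f y) (hmono : Monotone f)
    (p : ℝ) (hmin : ∀ y, 3*(f p)^2 - p ≤ 3*(f y)^2 - y)
    (hm : 3*(f p)^2 - p ≤ 0) : False := by
  have ha : 0 < f p := hpos p
  set a := f p with had
  have hp3 : 3*a^2 ≤ p := by nlinarith [hm]
  have ha2p : a^2 ≤ p := by nlinarith [sq_nonneg a]
  have ha' : a ≠ 0 := ne_of_gt ha
  set g : ℝ → ℝ := fun y => 3*(f y)^2 - y with hgd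
  have hgd' : ∀ x, HasDerivAt g (6*f x*deriv f x - 1) x := by
    intro x
    have h1 : HasDerivAt (fun y => 3*(f y)^2) (3*(2*f x^1*deriv f x)) x :=
      ((hf x).hasDerivAt.pow 2).const_mul 3
    have h2 := h1.sub (hasDerivAt_id x)
    have h3 : 3*(2*f x^1*deriv f x) - 1 = 6*f x*deriv f x - 1 := by ring
    rw [h3] at h2
    exact h2
  have hlocmin : IsLocalMin g p := Filter.Eventually.of_forall (fun y => hmin y)
  have hderiv0 : deriv g p = 0 := hlocmin.deriv_eq_zero
  have h6 : 6*a*deriv f p - 1 = 0 := by rw [← (hgd' p).deriv, hderiv0]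
  have hfp' : deriv f p = 1/(6*a) := by
    field_simp
    linarith [h6]
  -- second order condition
  have hsec : 0 ≤ 6*(deriv f p)^2 + 6*a*((a^3 - p*a)/4) := by
    by_contra hneg
    push_neg at hneg
    have hDG : HasDerivAt (deriv g)
        (6*(deriv f p*deriv f p + f p*((f p^3 - p*f p)/4))) p := by
      have hdg : deriv g = fun x => 6*f x*deriv f x - 1 := funext (fun x => (hgd' x).deriv)
      rw [hdg]
      have h1 : HasDerivAt (fun x => f x * deriv f x)
          (deriv f p*deriv f p + f p*((f p^3 - p*f p)/4)) p :=
        (hf p).hasDerivAt.mul (hd2 hf' hode' p)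
      have h2 := (h1.const_mul 6).sub_const 1
      simpa [mul_assoc] using h2
    obtain ⟨t, ht, hlt⟩ := exists_right_lt
      (fun x => (hgd' x).differentiableAt.hasDerivAt) hderiv0 hDG (by nlinarith [hneg])
    exact absurd (hmin t) (by simp only [hgd] at hlt; linarith [hlt])
  have h18 : a^6 ≤ 1/18 := by
    rw [hfp'] at hsec
    have hsec2 : 0 ≤ 1 + 9*a^4*(a^2 - p) := by
      have h3 := mul_le_mul_of_nonneg_left hsec (show (0:ℝ) ≤ 6*a^2 by positivity)
      have h4 : 6*a^2*(6*(1/(6*a))^2 + 6*a*((a^3 - p*a)/4)) = 1 + 9*a^4*(a^2-p) := by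
        field_simp
        ring
      rw [h4] at h3
      linarith [h3]
    nlinarith [hsec2, mul_le_mul_of_nonneg_left hp3 (show (0:ℝ) ≤ 9*a^4 by positivity)]
  -- concavity of f on [a², p]
  have hconc : AntitoneOn (deriv f) (Set.Icc (a^2) p) := by
    apply antitoneOn_of_deriv_nonpos (convex_Icc _ _)
    · exact hf'.continuous.continuousOn
    · exact hf'.differentiableOn
    · intro x hx
      rw [interior_Icc] at hx
      rw [hode' x]
      have h1 : f x ≤ a := hmono hx.2.le
      have h2 : 0 < f x := hpos x
      have h3 : f x^2 ≤ a^2 := by nlinarith [h1, h2]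
      nlinarith [mul_pos h2 (show (0:ℝ) < x - f x^2 by nlinarith [hx.1, h3])]
  have hflow : ∀ t ∈ Set.Icc (a^2) p, 1/(6*a) ≤ deriv f t := by
    intro t ht
    have := hconc ht (Set.right_mem_Icc.mpr ha2p) ht.2
    rwa [hfp'] at this
  -- linear upper bound
  have hlin : ∀ t ∈ Set.Icc (a^2) p, f t ≤ a + (t - p)/(6*a) := by
    have hφd : ∀ x, HasDerivAt (fun t => f t - t/(6*a)) (deriv f x - 1/(6*a)) x := by
      intro x
      have h1 := (hf x).hasDerivAt.fun_sub ((hasDerivAt_id x).div_const (6*a))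
      simpa using h1
    have hφmono : MonotoneOn (fun t => f t - t/(6*a)) (Set.Icc (a^2) p) := by
      apply monotoneOn_of_deriv_nonneg (convex_Icc _ _)
      · exact Continuous.continuousOn (by have := hf.continuous; fun_prop)
      · intro x hx
        exact (hφd x).differentiableAt.differentiableWithinAt
      · intro x hx
        rw [interior_Icc] at hx
        rw [(hφd x).deriv]
        have := hflow x ⟨hx.1.le, hx.2.le⟩
        linarith
    intro t ht
    have h1 := hφmono ht (Set.right_mem_Icc.mpr ha2p) ht.2
    simp only at h1
    have heq : a + (t - p)/(6*a) = (a - p/(6*a)) + t/(6*a) := by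
      field_simp
      ring
    rw [heq]
    linarith [h1]
  set X : ℝ := 7*a^2 - p with hX
  have heqX : a + (a^2 - p)/(6*a) = X/(6*a) := by
    field_simp
    ring
  have hβ : f (a^2) ≤ X/(6*a) := by
    have h1 := hlin (a^2) (Set.left_mem_Icc.mpr ha2p)
    rwa [heqX] at h1
  have hX0 : 0 < X := by
    have h1 := hpos (a^2)
    have h2 : (0:ℝ) < 6*a := by positivity
    have h3 : X/(6*a)*(6*a) = X := by field_simp
    nlinarith [mul_pos (lt_of_lt_of_le h1 hβ) h2, h3]
  have hX4 : X ≤ 4*a^2 := by simp only [hX]; linarith [hp3]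
  have hXa0 : 0 < X/(6*a) := lt_of_lt_of_le (hpos _) hβ
  -- integral estimates
  have hint : ∀ c d : ℝ, IntervalIntegrable (fun t => (f t)^2/2) MeasureTheory.volume c d :=
    fun c d => Continuous.intervalIntegrable (by have := hf.continuous; fun_prop) c d
  have hftc : ∫ t in (0:ℝ)..p, (f t)^2/2 = Ffun f p - Ffun f 0 := by
    apply intervalIntegral.integral_eq_sub_of_hasDerivAt
    · exact fun x _ => hFd hf hf' hode' x
    · exact hint 0 p
  have hsplit : ∫ t in (0:ℝ)..p, (f t)^2/2
      = (∫ t in (0:ℝ)..(a^2), (f t)^2/2) + ∫ t in (a^2)..p, (f t)^2/2 :=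
    (intervalIntegral.integral_add_adjacent_intervals (hint 0 (a^2)) (hint (a^2) p)).symm
  have ha20 : (0:ℝ) ≤ a^2 := sq_nonneg a
  have hI1 : ∫ t in (0:ℝ)..(a^2), (f t)^2/2 ≤ a^2*((X/(6*a))^2/2) := by
    have h1 : ∫ t in (0:ℝ)..(a^2), (f t)^2/2 ≤ ∫ t in (0:ℝ)..(a^2), (X/(6*a))^2/2 := by
      apply intervalIntegral.integral_mono_on ha20 (hint 0 (a^2))
        (Continuous.intervalIntegrable (by fun_prop) _ _)
      intro x hx
      have h2 : f x ≤ f (a^2) := hmono hx.2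
      have h3 : 0 < f x := hpos x
      have h4 := pow_le_pow_left₀ h3.le (le_trans h2 hβ) 2
      linarith [h4]
    rw [intervalIntegral.integral_const] at h1
    simpa using h1
  have hI2 : ∫ t in (a^2)..p, (f t)^2/2 ≤ a^4 - a*(X/(6*a))^3 := by
    have h1 : ∫ t in (a^2)..p, (f t)^2/2
        ≤ ∫ t in (a^2)..p, (a + (t - p)/(6*a))^2/2 := by
      apply intervalIntegral.integral_mono_on ha2p (hint (a^2) p)
        (Continuous.intervalIntegrable (by fun_prop) _ _)
      intro x hx
      have h2 := hlin x hx
      have h3 : 0 < f x := hpos x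
      have h4 := pow_le_pow_left₀ h3.le h2 2
      linarith [h4]
    set Φ : ℝ → ℝ := fun t => a*(a + (t - p)/(6*a))^3 with hΦ
    have h2 : ∫ t in (a^2)..p, (a + (t - p)/(6*a))^2/2 = Φ p - Φ (a^2) := by
      apply intervalIntegral.integral_eq_sub_of_hasDerivAt
      · intro x _
        have hin : HasDerivAt (fun t : ℝ => a + (t - p)/(6*a)) (1/(6*a)) x := by
          have := ((hasDerivAt_id x).sub_const p).div_const (6*a)
          simpa using this.const_add a
        have h4 := (hin.pow 3).const_mul a
        have h5 : a*(((3:ℕ):ℝ)*(a + (x - p)/(6*a))^(3-1)*(1/(6*a)))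
            = (a + (x - p)/(6*a))^2/2 := by
          push_cast
          field_simp
          ring
        rw [h5] at h4
        exact h4
      · exact Continuous.intervalIntegrable (by fun_prop) _ _
    simp only [hΦ] at h2
    rw [h2, heqX] at h1
    have h6 : a*(a + (p - p)/(6*a))^3 = a^4 := by
      field_simp
      ring
    rw [h6] at h1
    exact h1
  have hF0b : Ffun f 0 ≤ (X/(6*a))^2 := by
    have h1 := F0_le hf hf' hode' hpos hge hmono
    have h2 : f 0 ≤ f (a^2) := hmono ha20
    have h3 : 0 < f 0 := hpos 0
    have h4 := pow_le_pow_left₀ h3.le (le_trans h2 hβ) 2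
    linarith [h4]
  have hcomb : Ffun f p ≤ (X/(6*a))^2 + a^2*((X/(6*a))^2/2) + (a^4 - a*(X/(6*a))^3) := by
    linarith [hftc, hsplit, hI1, hI2, hF0b]
  have hFp : Ffun f p = 2*(1/(6*a))^2 + (p^2 - (a^2 - p)^2)/4 := by
    simp only [Ffun]
    rw [hfp']
  -- clear denominators and conclude
  have hcomb2 : (2*(1/(6*a))^2 + (p^2 - (a^2-p)^2)/4) * (216*a^2)
      ≤ ((X/(6*a))^2 + a^2*((X/(6*a))^2/2) + (a^4 - a*(X/(6*a))^3)) * (216*a^2) := by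
    apply mul_le_mul_of_nonneg_right _ (by positivity)
    rw [← hFp]
    exact hcomb
  have hL : (2*(1/(6*a))^2 + (p^2 - (a^2-p)^2)/4) * (216*a^2)
      = 12 + 54*a^2*(2*a^2*p - a^4) := by
    field_simp
    ring
  have hR : ((X/(6*a))^2 + a^2*((X/(6*a))^2/2) + (a^4 - a*(X/(6*a))^3)) * (216*a^2)
      = 6*X^2 + 3*a^2*X^2 + 216*a^6 - X^3 := by
    field_simp
    ring
  rw [hL, hR] at hcomb2
  have hpX : p = 7*a^2 - X := by simp only [hX]; ring
  have hpoly := poly (a^2) X (by positivity) (by nlinarith [h18]) hX0 hX4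
  rw [hpX] at hcomb2
  nlinarith [hpoly, hcomb2]

end W0aux


/-- The potential `W₀(y) = 3ν₀(y)² - y` associated with the Hastings–McLeod solution `ν₀`
of Painlevé-II `4ν'' + yν - ν³ = 0` is bounded below by a positive constant. -/
theorem W0_bounded_below (ν₀ : ℝ → ℝ)
    (hsmooth : ContDiff ℝ (⊤ : ℕ∞) ν₀)
    (hode : ∀ y : ℝ, 4 * deriv (deriv ν₀) y + y * ν₀ y - ν₀ y ^ 3 = 0)
    (hpos : ∀ y : ℝ, 0 < ν₀ y)
    (hmono : StrictMono ν₀)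
    (htop : Tendsto (fun y => ν₀ y / Real.sqrt y) atTop (nhds 1))
    (hbot : Tendsto ν₀ atBot (nhds 0)) :
    ∃ Wmin : ℝ, 0 < Wmin ∧ ∀ y : ℝ, Wmin ≤ 3 * ν₀ y ^ 2 - y := by
  obtain ⟨hdf, hdf'⟩ := W0aux.diffs hsmooth
  have hode' : ∀ y, deriv (deriv ν₀) y = (ν₀ y ^ 3 - y * ν₀ y)/4 := fun y => by
    linarith [hode y]
  have hge : ∀ y, 0 ≤ deriv ν₀ y :=
    W0aux.deriv_nonneg_of_monotone hdf hmono.monotone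
  obtain ⟨p, hp⟩ := W0aux.exists_min hdf hpos htop
  refine ⟨3*(ν₀ p)^2 - p, ?_, fun y => by linarith [hp y]⟩
  by_contra hneg
  push_neg at hneg
  exact W0aux.main_contra hdf hdf' hode' hpos hge hmono.monotone p hp hneg
end

section
/- There exists C > 0 such that for all sufficiently small ε > 0 and every u in the weighted Sobolev space H¹_ε, u is continuous on (-∞, ε^{-2/3}) and ‖u‖_{L^∞(-∞,ε^{-2/3})} ≤ C ‖u‖_{H¹_ε}. -/
/-!
Since `u²` and `2uu'` are integrable near `-∞`, `u²` tends to `0` there and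
`u(y)² = ∫_{-∞}^y 2uu'`. In the weighted energy density
`a^{-1/2}(4a u'² + W u²) = 4√a u'² + W u²/√a`, with `a = 1 - ε^{2/3} y`, AM-GM bounds `|2uu'|`
by a multiple of the density, uniformly in `a`; and the potential `W ≥ max(W_min, -y)` outgrows
`√a ≲ √(1 + |y|)`, so the density also dominates a multiple of `u²`.
-/

open Set MeasureTheory

theorem norm_le_integral_norm_deriv_Iic {E : Type*} [NormedAddCommGroup E] [NormedSpace ℝ E]
    [CompleteSpace E] {f f' : ℝ → E} {a : ℝ} (hderiv : ∀ x ∈ Iic a, HasDerivAt f (f' x) x)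
    (f'int : IntegrableOn f' (Iic a)) (fint : IntegrableOn f (Iic a)) :
    ‖f a‖ ≤ ∫ x in Iic a, ‖f' x‖ := by
  have hlim := tendsto_zero_of_hasDerivAt_of_integrableOn_Iic hderiv f'int fint
  have hftc := integral_Iic_of_hasDerivAt_of_tendsto' hderiv f'int hlim
  rw [sub_zero] at hftc
  rw [← hftc]
  exact norm_integral_le_integral_norm _

theorem sq_le_integral_of_abs_two_mul_deriv_le {u u' g : ℝ → ℝ} {L : ℝ}
    (hderiv : ∀ x ∈ Iio L, HasDerivAt u (u' x) x) (hu : IntegrableOn (fun x => u x ^ 2) (Iio L))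
    (hg : IntegrableOn g (Iio L)) (hbound : ∀ x ∈ Iio L, |2 * u x * u' x| ≤ g x) :
    ∀ y ∈ Iio L, u y ^ 2 ≤ ∫ x in Iio L, g x := by
  intro y hy
  have hsub : Iic y ⊆ Iio L := Iic_subset_Iio.mpr hy
  have hderiv_sq : ∀ x ∈ Iic y, HasDerivAt (fun x => u x ^ 2) (2 * u x * u' x) x := fun x hx =>
    ((hderiv x (hsub hx)).fun_pow 2).congr_deriv (by push_cast; ring)
  have hmeas : AEStronglyMeasurable (fun x => 2 * u x * u' x) (volume.restrict (Iio L)) := by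
    have hu_cont : ContinuousOn u (Iio L) := fun x hx =>
      (hderiv x hx).continuousAt.continuousWithinAt
    have hu' : AEStronglyMeasurable u' (volume.restrict (Iio L)) := by
      refine (measurable_deriv u).aestronglyMeasurable.congr ?_
      filter_upwards [ae_restrict_mem measurableSet_Iio] with x hx
      exact (hderiv x hx).deriv
    exact ((hu_cont.aestronglyMeasurable measurableSet_Iio).const_mul 2).mul hu'
  have hint : IntegrableOn (fun x => 2 * u x * u' x) (Iio L) :=
    hg.mono' hmeas ((ae_restrict_mem measurableSet_Iio).mono hbound)
  have hg_nonneg : ∀ x ∈ Iio L, 0 ≤ g x := fun x hx => (abs_nonneg _).trans (hbound x hx)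
  calc u y ^ 2 = ‖u y ^ 2‖ := (Real.norm_of_nonneg (sq_nonneg _)).symm
    _ ≤ ∫ x in Iic y, ‖2 * u x * u' x‖ :=
        norm_le_integral_norm_deriv_Iic hderiv_sq (hint.mono_set hsub) (hu.mono_set hsub)
    _ ≤ ∫ x in Iic y, g x :=
        setIntegral_mono_on (hint.mono_set hsub).norm (hg.mono_set hsub) measurableSet_Iic
          fun x hx => hbound x (hsub hx)
    _ ≤ ∫ x in Iio L, g x :=
        setIntegral_mono_set hg ((ae_restrict_mem measurableSet_Iio).mono hg_nonneg)
          hsub.eventuallyLE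

/-- The integrand of `‖u‖²_{H¹_ε}` at `y`, with `a = 1 - ε^{2/3} y`, `W = W₀(y)`, `p = u(y)`
and `q = u'(y)`. -/
noncomputable def weightedEnergy (a W p q : ℝ) : ℝ :=
  a ^ (-(1:ℝ)/2) * (4 * a * q ^ 2 + W * p ^ 2)

theorem weightedEnergy_eq {a : ℝ} (ha : 0 < a) (W p q : ℝ) :
    weightedEnergy a W p q = 4 * √a * q ^ 2 + W * p ^ 2 / √a := by
  have hrpow : a ^ (-(1:ℝ)/2) = (√a)⁻¹ := by
    rw [show (-(1:ℝ)/2) = -(1/2) by ring, Real.rpow_neg ha.le, Real.sqrt_eq_rpow]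
  rw [weightedEnergy, hrpow]
  field_simp
  rw [Real.sq_sqrt ha.le]
  ring

theorem abs_two_mul_le_weightedEnergy {a W K : ℝ} (ha : 0 < a) (hK : 1 ≤ K)
    (hKW : 1 ≤ 4 * K * W) (p q : ℝ) :
    |2 * p * q| ≤ K * weightedEnergy a W p q := by
  rw [weightedEnergy_eq ha]
  set s := √a
  have hs : 0 < s := Real.sqrt_pos.mpr ha
  have hamgm : 2 * |p| * |q| ≤ 4 * s * q ^ 2 + p ^ 2 / (4 * s) := by
    rw [← sq_abs p, ← sq_abs q, ← sub_nonneg]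
    have : 4 * s * |q| ^ 2 + |p| ^ 2 / (4 * s) - 2 * |p| * |q| =
        (4 * s * |q| - |p|) ^ 2 / (4 * s) := by
      field_simp
      ring
    rw [this]
    positivity
  have hslope : 4 * s * q ^ 2 ≤ K * (4 * s * q ^ 2) := le_mul_of_one_le_left (by positivity) hK
  have hvalue : p ^ 2 / (4 * s) ≤ K * (W * p ^ 2 / s) := by
    rw [div_le_iff₀ (by positivity)]
    have : K * (W * p ^ 2 / s) * (4 * s) = 4 * K * W * p ^ 2 := by
      field_simp
    rw [this]
    exact le_mul_of_one_le_left (sq_nonneg p) hKW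
  rw [abs_mul, abs_mul, abs_two]
  linarith

theorem mul_sq_le_weightedEnergy {a W c : ℝ} (ha : 0 < a) (hc : c ≤ W / √a) (p q : ℝ) :
    c * p ^ 2 ≤ weightedEnergy a W p q := by
  rw [weightedEnergy_eq ha, mul_div_right_comm]
  have : 0 ≤ 4 * √a * q ^ 2 := by positivity
  nlinarith [sq_nonneg p]

theorem le_potential_div_sqrt {e y W Wmin : ℝ} (he : 0 ≤ e) (he1 : e ≤ 1) (hey : e * y < 1)
    (hWmin : 0 < Wmin) (hW : Wmin ≤ W) (hWy : -y ≤ W) :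
    min Wmin 1 / 2 ≤ W / √(1 - e * y) := by
  set m := min Wmin 1
  have hm : 0 < m := lt_min hWmin one_pos
  have hm1 : m ≤ 1 := min_le_right _ _
  have hmW : m ≤ W := (min_le_left _ _).trans hW
  rw [le_div_iff₀ (Real.sqrt_pos.mpr (by linarith)), ← Real.sqrt_sq (by positivity : 0 ≤ m / 2),
    ← Real.sqrt_mul (sq_nonneg _), ← Real.sqrt_sq (hm.le.trans hmW)]
  refine Real.sqrt_le_sqrt ?_
  rcases le_or_gt 0 y with hy | hy
  · nlinarith [mul_nonneg he hy]
  · have hey' : 1 - e * y ≤ 1 - y := by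
      nlinarith [mul_nonneg (sub_nonneg.mpr he1) (neg_nonneg.mpr hy.le)]
    have hmmy : m * (m * -y) ≤ m * -y :=
      mul_le_of_le_one_left (mul_nonneg hm.le (by linarith)) hm1
    nlinarith [mul_le_mul hmW hmW hm.le (hm.le.trans hmW),
      mul_le_mul_of_nonneg_left hey' (sq_nonneg (m / 2))]

theorem integrableOn_sq_of_integrableOn_weightedEnergy {e Wmin L : ℝ} {V u u' : ℝ → ℝ}
    (he : 0 ≤ e) (he1 : e ≤ 1) (hey : ∀ y ∈ Iio L, e * y < 1) (hWmin : 0 < Wmin)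
    (hV : ∀ y, Wmin ≤ V y) (hVy : ∀ y, -y ≤ V y) (hcont : ContinuousOn u (Iio L))
    (hint : IntegrableOn (fun y => weightedEnergy (1 - e * y) (V y) (u y) (u' y)) (Iio L)) :
    IntegrableOn (fun y => u y ^ 2) (Iio L) := by
  have hc : 0 < min Wmin 1 / 2 := by positivity
  refine (hint.const_mul (min Wmin 1 / 2)⁻¹).mono'
    ((hcont.pow 2).aestronglyMeasurable measurableSet_Iio) ?_
  filter_upwards [ae_restrict_mem measurableSet_Iio] with y hy
  rw [Real.norm_of_nonneg (sq_nonneg _), ← div_eq_inv_mul, le_div_iff₀' hc]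
  exact mul_sq_le_weightedEnergy (sub_pos.mpr (hey y hy))
    (le_potential_div_sqrt he he1 (hey y hy) hWmin (hV y) (hVy y)) _ _

theorem rpow_mul_lt_one_of_lt_rpow_neg {ε r y : ℝ} (hε : 0 < ε) (hy : y < ε ^ (-r)) :
    ε ^ r * y < 1 :=
  calc ε ^ r * y < ε ^ r * ε ^ (-r) := mul_lt_mul_of_pos_left hy (Real.rpow_pos_of_pos hε r)
    _ = 1 := by rw [Real.rpow_neg hε.le, mul_inv_cancel₀ (Real.rpow_pos_of_pos hε r).ne']

/-- Lemma 4.2: uniform Sobolev embedding `H¹_ε ↪ L^∞(-∞, ε^{-2/3})`: there exists `C > 0`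
such that for all sufficiently small `ε > 0`, every `u ∈ H¹_ε` is continuous on
`(-∞, ε^{-2/3})` and satisfies `‖u‖_{L^∞} ≤ C ‖u‖_{H¹_ε}`. -/
theorem sobolev_embedding_H1eps (ν₀ : ℝ → ℝ) (Wmin : ℝ) (hWmin : 0 < Wmin)
    (hW : ∀ y : ℝ, Wmin ≤ 3 * ν₀ y ^ 2 - y) :
    ∃ C : ℝ, 0 < C ∧ ∃ ε₀ : ℝ, 0 < ε₀ ∧ ∀ ε : ℝ, 0 < ε → ε < ε₀ →
      ∀ u u' : ℝ → ℝ,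
        (∀ y ∈ Iio (ε ^ (-(2:ℝ)/3)), HasDerivAt u (u' y) y) →
        IntegrableOn (fun y => (1 - ε ^ ((2:ℝ)/3) * y) ^ (-(1:ℝ)/2) *
          (4 * (1 - ε ^ ((2:ℝ)/3) * y) * u' y ^ 2 + (3 * ν₀ y ^ 2 - y) * u y ^ 2))
          (Iio (ε ^ (-(2:ℝ)/3))) →
        ContinuousOn u (Iio (ε ^ (-(2:ℝ)/3))) ∧
        ∀ y ∈ Iio (ε ^ (-(2:ℝ)/3)),
          |u y| ≤ C * Real.sqrt (∫ y in Iio (ε ^ (-(2:ℝ)/3)),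
            (1 - ε ^ ((2:ℝ)/3) * y) ^ (-(1:ℝ)/2) *
            (4 * (1 - ε ^ ((2:ℝ)/3) * y) * u' y ^ 2 + (3 * ν₀ y ^ 2 - y) * u y ^ 2)) := by
  set K : ℝ := 1 + (4 * Wmin)⁻¹
  have hK1 : 1 ≤ K := le_add_of_nonneg_right (by positivity)
  have hKW : 1 ≤ 4 * K * Wmin := by
    have : 4 * K * Wmin = 4 * Wmin + 1 := by simp only [K]; field_simp
    linarith
  refine ⟨√K, Real.sqrt_pos.mpr (by linarith), 1, one_pos,
    fun ε hε hε1 u u' hderiv hint => ?_⟩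
  set e := ε ^ ((2:ℝ)/3)
  have hey : ∀ y ∈ Iio (ε ^ (-(2:ℝ)/3)), e * y < 1 := fun y hy =>
    rpow_mul_lt_one_of_lt_rpow_neg hε (by rwa [neg_div] at hy)
  set L := ε ^ (-(2:ℝ)/3)
  change IntegrableOn (fun y => weightedEnergy (1 - e * y) (3 * ν₀ y ^ 2 - y) (u y) (u' y))
    (Iio L) at hint
  have hcont : ContinuousOn u (Iio L) := fun y hy =>
    (hderiv y hy).continuousAt.continuousWithinAt
  have hsq_int := integrableOn_sq_of_integrableOn_weightedEnergy (Real.rpow_nonneg hε.le _)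
    (Real.rpow_le_one hε.le hε1.le (by norm_num)) hey hWmin hW
    (fun y => by nlinarith [sq_nonneg (ν₀ y)]) hcont hint
  refine ⟨hcont, fun y hy => ?_⟩
  have hsq := sq_le_integral_of_abs_two_mul_deriv_le hderiv hsq_int (hint.const_mul K)
    (fun x hx => abs_two_mul_le_weightedEnergy (sub_pos.mpr (hey x hx)) hK1
      (hKW.trans (by gcongr; exact hW x)) _ _) y hy
  rw [integral_const_mul] at hsq
  calc |u y| = √(u y ^ 2) := (Real.sqrt_sq_eq_abs _).symm
    _ ≤ √(K * ∫ x in Iio L, weightedEnergy (1 - e * x) (3 * ν₀ x ^ 2 - x) (u x) (u' x)) :=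
        Real.sqrt_le_sqrt hsq
    _ = √K * √(∫ x in Iio L, weightedEnergy (1 - e * x) (3 * ν₀ x ^ 2 - x) (u x) (u' x)) :=
        Real.sqrt_mul (by linarith) _
end

section
/- There exists C > 0 such that for every u ∈ H¹_ε and p ∈ {2,3}, the power u^p belongs to L²_ε with ‖u^p‖_{L²_ε} ≤ C ‖u‖^p_{H¹_ε}; consequently, the nonlinear term N₀(R) = -3ν₀R² - R³ satisfies ‖N₀(R)‖_{L²_ε} ≤ C(‖ν₀‖_{L^∞(-∞,ε^{-2/3})}‖R‖²_{H¹_ε} + ‖R‖³_{H¹_ε}). -/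
open Set MeasureTheory

/-!
Agmon-type bound: on `[-1, 0]` the weight is at least `1/√2`, so since `W₀ ≥ W_min` some point
`x₀ ∈ [-1, 0]` has `u(x₀)² ≤ √2 ‖u‖²_{H¹_ε} / W_min`. Because the weight `r = (1 - ε^{2/3} y)^{-1/2}`
satisfies `r² (1 - ε^{2/3} y) = 1`, AM-GM dominates `|(u²)'| = 2|u u'|` by the `H¹_ε` energy density
divided by `2√W_min`, so `u²` oscillates by at most `‖u‖²_{H¹_ε} / (2√W_min)`. Hence
`‖u‖_∞ ≤ κ ‖u‖_{H¹_ε}` with `κ` independent of `ε ≤ 1`. Both `u^p` and `N₀(u)` are `u` times a function bounded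
in terms of `‖u‖_∞` and `‖ν₀‖_∞`, and `‖u‖_{L²_ε} ≤ ‖u‖_{H¹_ε} / √W_min`.
-/

theorem abs_sub_le_setIntegral_of_abs_deriv_le {s : Set ℝ} (hs : s.OrdConnected)
    {f f' e : ℝ → ℝ} (hf : ∀ y ∈ s, HasDerivAt f (f' y) y) (he : IntegrableOn e s)
    (hfe : ∀ y ∈ s, |f' y| ≤ e y) {x y : ℝ} (hx : x ∈ s) (hy : y ∈ s) :
    |f y - f x| ≤ ∫ t in s, e t := by
  wlog hxy : x ≤ y generalizing x y
  · rw [abs_sub_comm]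
    exact this hy hx (le_of_not_ge hxy)
  have hsub : Icc x y ⊆ s := hs.out hx hy
  have hcont : ContinuousOn f (Icc x y) :=
    fun t ht => (hf t (hsub ht)).continuousAt.continuousWithinAt
  have hderiv : ∀ t ∈ Ioo x y, HasDerivWithinAt f (f' t) (Ioi t) t :=
    fun t ht => (hf t (hsub (Ioo_subset_Icc_self ht))).hasDerivWithinAt
  have hupper : f y - f x ≤ ∫ t in x..y, e t :=
    intervalIntegral.sub_le_integral_of_hasDeriv_right_of_le hxy hcont hderiv (he.mono_set hsub)
      fun t ht => (le_abs_self _).trans (hfe t (hsub (Ioo_subset_Icc_self ht)))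
  have hlower : ∫ t in x..y, -e t ≤ f y - f x :=
    intervalIntegral.integral_le_sub_of_hasDeriv_right_of_le hxy hcont hderiv
      (he.mono_set hsub).neg
      fun t ht => neg_le_of_abs_le (hfe t (hsub (Ioo_subset_Icc_self ht)))
  have hmono : ∫ t in x..y, e t ≤ ∫ t in s, e t := by
    rw [intervalIntegral.integral_of_le hxy]
    exact setIntegral_mono_set he
      ((ae_restrict_iff' hs.measurableSet).mpr
        (ae_of_all _ fun t ht => (abs_nonneg _).trans (hfe t ht)))
      (Ioc_subset_Icc_self.trans hsub).eventuallyLE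
  rw [intervalIntegral.integral_neg] at hlower
  rw [abs_le]
  constructor <;> linarith

theorem exists_mul_le_setIntegral_Icc {α β : ℝ} (hαβ : α ≤ β) {g f : ℝ → ℝ}
    (hg : ContinuousOn g (Icc α β)) (hf : IntegrableOn f (Icc α β))
    (hgf : ∀ x ∈ Icc α β, g x ≤ f x) :
    ∃ x₀ ∈ Icc α β, (β - α) * g x₀ ≤ ∫ x in Icc α β, f x := by
  obtain ⟨x₀, hx₀, hmin⟩ := isCompact_Icc.exists_isMinOn (nonempty_Icc.mpr hαβ) hg
  refine ⟨x₀, hx₀, ?_⟩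
  have h := setIntegral_ge_of_const_le measurableSet_Icc measure_Icc_lt_top.ne
    (fun x hx => (hmin hx).trans (hgf x hx)) hf
  rwa [Real.volume_real_Icc_of_le hαβ, smul_eq_mul] at h

theorem sqrt_setIntegral_mul_sq_le {s : Set ℝ} (hs : MeasurableSet s) {w u f e : ℝ → ℝ}
    {m G : ℝ} (hm : 0 < m) (hG : 0 ≤ G) (hw : ∀ y ∈ s, 0 ≤ w y)
    (hwu : ∀ y ∈ s, m * (w y * u y ^ 2) ≤ e y) (hf : ∀ y ∈ s, |f y| ≤ G * |u y|)
    (he : IntegrableOn e s) :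
    √(∫ y in s, w y * f y ^ 2) ≤ G / √m * √(∫ y in s, e y) := by
  have hpt : ∀ y ∈ s, w y * f y ^ 2 ≤ (G / √m) ^ 2 * e y := by
    intro y hy
    have hf2 : f y ^ 2 ≤ G ^ 2 * u y ^ 2 := by
      rw [← sq_abs (f y), ← sq_abs (u y), ← mul_pow]
      exact pow_le_pow_left₀ (abs_nonneg _) (hf y hy) 2
    calc w y * f y ^ 2 ≤ w y * (G ^ 2 * u y ^ 2) := mul_le_mul_of_nonneg_left hf2 (hw y hy)
      _ = G ^ 2 / m * (m * (w y * u y ^ 2)) := by field_simp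
      _ ≤ G ^ 2 / m * e y := by gcongr; exact hwu y hy
      _ = (G / √m) ^ 2 * e y := by rw [div_pow, Real.sq_sqrt hm.le]
  have hint : ∫ y in s, w y * f y ^ 2 ≤ (G / √m) ^ 2 * ∫ y in s, e y := by
    rw [← integral_const_mul]
    exact integral_mono_of_nonneg
      ((ae_restrict_iff' hs).mpr (ae_of_all _ fun y hy => mul_nonneg (hw y hy) (sq_nonneg _)))
      (he.const_mul _) ((ae_restrict_iff' hs).mpr (ae_of_all _ hpt))
  calc √(∫ y in s, w y * f y ^ 2) ≤ √((G / √m) ^ 2 * ∫ y in s, e y) := Real.sqrt_le_sqrt hint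
    _ = G / √m * √(∫ y in s, e y) := by
      rw [Real.sqrt_mul (sq_nonneg _), Real.sqrt_sq (by positivity)]

theorem rpow_neg_half_eq_inv_sqrt {t : ℝ} (ht : 0 ≤ t) : t ^ (-(1:ℝ)/2) = (√t)⁻¹ := by
  rw [show -(1:ℝ)/2 = -(1/2) by norm_num, Real.rpow_neg ht, Real.sqrt_eq_rpow]

theorem mul_mul_sq_le_weighted {r t w Wmin v d : ℝ} (hr : 0 ≤ r) (ht : 0 ≤ t) (hw : Wmin ≤ w) :
    Wmin * (r * v ^ 2) ≤ r * (4 * t * d ^ 2 + w * v ^ 2) := by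
  nlinarith [mul_nonneg (mul_nonneg hr ht) (sq_nonneg d),
    mul_le_mul_of_nonneg_left hw (mul_nonneg hr (sq_nonneg v))]

theorem four_sqrt_mul_abs_le_weighted {r t w Wmin v d : ℝ} (hr : 0 < r) (hrt : r ^ 2 * t = 1)
    (hWmin : 0 ≤ Wmin) (hw : Wmin ≤ w) :
    4 * √Wmin * |v * d| ≤ r * (4 * t * d ^ 2 + w * v ^ 2) := by
  set s := √Wmin
  have hs2 : s ^ 2 = Wmin := Real.sq_sqrt hWmin
  have hamgm : r * (4 * s * |v * d|) ≤ r * (r * (4 * t * d ^ 2 + Wmin * v ^ 2)) := by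
    have hsq : r * (r * (4 * t * d ^ 2 + s ^ 2 * v ^ 2)) - r * (4 * s * (|v| * |d|)) =
        (2 * |d| - r * s * |v|) ^ 2 := by
      linear_combination 4 * d ^ 2 * hrt - 4 * sq_abs d - r ^ 2 * s ^ 2 * sq_abs v
    rw [abs_mul, ← hs2]
    nlinarith [sq_nonneg (2 * |d| - r * s * |v|)]
  have hmono : r * (4 * t * d ^ 2 + Wmin * v ^ 2) ≤ r * (4 * t * d ^ 2 + w * v ^ 2) := by
    gcongr
  nlinarith [le_of_mul_le_mul_left hamgm hr]

noncomputable def weight (a y : ℝ) : ℝ := (1 - a * y) ^ (-(1:ℝ)/2)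

/-- With `a = ε^{2/3}` and `W = W₀`, the integral of `energyDensity` over `(-∞, a⁻¹)` is
`‖u‖²_{H¹_ε}`. -/
noncomputable def energyDensity (a : ℝ) (W u u' : ℝ → ℝ) (y : ℝ) : ℝ :=
  weight a y * (4 * (1 - a * y) * u' y ^ 2 + W y * u y ^ 2)

/-- `√2 / Wmin` bounds `u²` at a point of `[-1, 0]`, `1 / (2 √Wmin)` its oscillation. -/
noncomputable def agmonConstant (Wmin : ℝ) : ℝ := √2 / Wmin + 1 / (2 * √Wmin)

theorem agmonConstant_pos {Wmin : ℝ} (hWmin : 0 < Wmin) : 0 < agmonConstant Wmin := by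
  have := Real.sqrt_pos.mpr hWmin
  unfold agmonConstant
  positivity

section Weighted

variable {a b Wmin y : ℝ} {W u u' : ℝ → ℝ}

theorem one_sub_mul_pos (ha : 0 < a) (hab : a * b = 1) (hy : y < b) : 0 < 1 - a * y := by
  nlinarith

theorem weight_pos (ha : 0 < a) (hab : a * b = 1) (hy : y < b) : 0 < weight a y :=
  Real.rpow_pos_of_pos (one_sub_mul_pos ha hab hy) _

theorem inv_sqrt_two_le_weight (ha : 0 ≤ a) (ha1 : a ≤ 1) (hy : y ∈ Icc (-1 : ℝ) 0) :
    (√2)⁻¹ ≤ weight a y := by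
  have hpos : 0 < 1 - a * y := by nlinarith [hy.1, hy.2]
  rw [weight, rpow_neg_half_eq_inv_sqrt hpos.le]
  gcongr
  nlinarith [hy.1, hy.2]

theorem mul_weight_mul_sq_le_energyDensity (ha : 0 < a) (hab : a * b = 1) (hy : y < b)
    (hW : Wmin ≤ W y) : Wmin * (weight a y * u y ^ 2) ≤ energyDensity a W u u' y :=
  mul_mul_sq_le_weighted (weight_pos ha hab hy).le (one_sub_mul_pos ha hab hy).le hW

theorem abs_two_mul_mul_le_energyDensity (ha : 0 < a) (hab : a * b = 1) (hy : y < b)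
    (hWmin : 0 < Wmin) (hW : Wmin ≤ W y) :
    |2 * u y * u' y| ≤ energyDensity a W u u' y / (2 * √Wmin) := by
  have hpos := one_sub_mul_pos ha hab hy
  have hrt : weight a y ^ 2 * (1 - a * y) = 1 := by
    rw [weight, rpow_neg_half_eq_inv_sqrt hpos.le, inv_pow, Real.sq_sqrt hpos.le,
      inv_mul_cancel₀ hpos.ne']
  have h := four_sqrt_mul_abs_le_weighted (v := u y) (d := u' y) (weight_pos ha hab hy) hrt
    hWmin.le hW
  rw [energyDensity, le_div_iff₀ (by positivity), mul_assoc, abs_mul, abs_two]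
  linarith

theorem sq_le_agmonConstant_mul (ha : 0 < a) (ha1 : a ≤ 1) (hab : a * b = 1) (hWmin : 0 < Wmin)
    (hW : ∀ y ∈ Iio b, Wmin ≤ W y) (hu : ∀ y ∈ Iio b, HasDerivAt u (u' y) y)
    (hint : IntegrableOn (energyDensity a W u u') (Iio b)) (hy : y < b) :
    u y ^ 2 ≤ agmonConstant Wmin * ∫ t in Iio b, energyDensity a W u u' t := by
  set E := ∫ t in Iio b, energyDensity a W u u' t
  have hb : 0 < b := (pos_iff_pos_of_mul_pos (hab ▸ one_pos)).mp ha
  have hIcc : Icc (-1 : ℝ) 0 ⊆ Iio b := fun t ht => ht.2.trans_lt hb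
  have he0 : ∀ t ∈ Iio b, 0 ≤ energyDensity a W u u' t := fun t ht =>
    le_trans (by have := weight_pos ha hab ht; positivity)
      (mul_weight_mul_sq_le_energyDensity ha hab ht (hW t ht))
  have hucont : ContinuousOn u (Icc (-1) 0) :=
    fun t ht => (hu t (hIcc ht)).continuousAt.continuousWithinAt
  -- `u²` is small somewhere in `[-1, 0]`, where the weight is bounded below
  obtain ⟨x₀, hx₀, hx₀E⟩ := exists_mul_le_setIntegral_Icc (g := fun t => Wmin / √2 * u t ^ 2)
    (by norm_num) (continuousOn_const.mul (hucont.pow 2)) (hint.mono_set hIcc) fun t ht =>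
      calc Wmin / √2 * u t ^ 2 = Wmin * ((√2)⁻¹ * u t ^ 2) := by ring
        _ ≤ Wmin * (weight a t * u t ^ 2) := by
          gcongr; exact inv_sqrt_two_le_weight ha.le ha1 ht
        _ ≤ _ := mul_weight_mul_sq_le_energyDensity ha hab (hIcc ht) (hW t (hIcc ht))
  have hIccE : ∫ t in Icc (-1 : ℝ) 0, energyDensity a W u u' t ≤ E :=
    setIntegral_mono_set hint ((ae_restrict_iff' measurableSet_Iio).mpr (ae_of_all _ he0))
      hIcc.eventuallyLE
  have hx₀sq : u x₀ ^ 2 ≤ √2 / Wmin * E := by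
    calc u x₀ ^ 2 = √2 / Wmin * (Wmin / √2 * u x₀ ^ 2) := by field_simp
      _ ≤ √2 / Wmin * E := by gcongr; linarith
  have hosc := abs_sub_le_setIntegral_of_abs_deriv_le ordConnected_Iio
    (f := fun t => u t ^ 2) (f' := fun t => 2 * u t * u' t)
    (fun t ht => by simpa using (hu t ht).fun_pow 2) (hint.div_const (2 * √Wmin))
    (fun t ht => abs_two_mul_mul_le_energyDensity ha hab ht hWmin (hW t ht)) (hIcc hx₀) hy
  rw [integral_div] at hosc
  calc u y ^ 2 ≤ u x₀ ^ 2 + E / (2 * √Wmin) := by linarith [(abs_le.mp hosc).2]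
    _ ≤ √2 / Wmin * E + E / (2 * √Wmin) := by linarith
    _ = agmonConstant Wmin * E := by rw [agmonConstant]; ring

theorem sqrt_integral_weight_mul_pow_sq_le (ha : 0 < a) (hab : a * b = 1) (hWmin : 0 < Wmin)
    (hW : ∀ y ∈ Iio b, Wmin ≤ W y) (hint : IntegrableOn (energyDensity a W u u') (Iio b))
    {K : ℝ} (hu : ∀ y ∈ Iio b, |u y| ≤ K) {p : ℕ} (hp : p ≠ 0) :
    √(∫ y in Iio b, weight a y * (u y ^ p) ^ 2) ≤
      K ^ (p - 1) / √Wmin * √(∫ y in Iio b, energyDensity a W u u' y) := by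
  have hK : 0 ≤ K := (abs_nonneg _).trans (hu (b - 1) (by simp))
  refine sqrt_setIntegral_mul_sq_le measurableSet_Iio hWmin (by positivity)
    (fun y hy => (weight_pos ha hab hy).le)
    (fun y hy => mul_weight_mul_sq_le_energyDensity ha hab hy (hW y hy)) (fun y hy => ?_) hint
  rw [← pow_sub_one_mul hp, abs_mul, abs_pow]
  gcongr
  exact hu y hy

theorem sqrt_integral_weight_mul_nonlinear_sq_le (ha : 0 < a) (hab : a * b = 1)
    (hWmin : 0 < Wmin) (hW : ∀ y ∈ Iio b, Wmin ≤ W y)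
    (hint : IntegrableOn (energyDensity a W u u') (Iio b)) {K : ℝ} (hu : ∀ y ∈ Iio b, |u y| ≤ K)
    {ν : ℝ → ℝ} {M : ℝ} (hν : ∀ y ∈ Iio b, |ν y| ≤ M) :
    √(∫ y in Iio b, weight a y * (-3 * ν y * u y ^ 2 - u y ^ 3) ^ 2) ≤
      (3 * M * K + K ^ 2) / √Wmin * √(∫ y in Iio b, energyDensity a W u u' y) := by
  have hK : 0 ≤ K := (abs_nonneg _).trans (hu (b - 1) (by simp))
  have hM : 0 ≤ M := (abs_nonneg _).trans (hν (b - 1) (by simp))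
  refine sqrt_setIntegral_mul_sq_le measurableSet_Iio hWmin (by positivity)
    (fun y hy => (weight_pos ha hab hy).le)
    (fun y hy => mul_weight_mul_sq_le_energyDensity ha hab hy (hW y hy)) (fun y hy => ?_) hint
  have hνu : |3 * ν y * u y| ≤ 3 * M * K := by
    rw [abs_mul, abs_mul, abs_of_pos three_pos]
    gcongr
    exacts [hν y hy, hu y hy]
  have hu2 : |u y ^ 2| ≤ K ^ 2 := by
    rw [abs_pow]
    gcongr
    exact hu y hy
  calc |-3 * ν y * u y ^ 2 - u y ^ 3| = |3 * ν y * u y + u y ^ 2| * |u y| := by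
        rw [← abs_mul, ← abs_neg]; congr 1; ring
    _ ≤ (|3 * ν y * u y| + |u y ^ 2|) * |u y| := by gcongr; exact abs_add_le _ _
    _ ≤ (3 * M * K + K ^ 2) * |u y| := by gcongr

end Weighted

theorem rpow_two_thirds_mul_rpow_neg_two_thirds {ε : ℝ} (hε : 0 < ε) :
    ε ^ ((2:ℝ)/3) * ε ^ (-(2:ℝ)/3) = 1 := by
  rw [← Real.rpow_add hε]
  norm_num

/-- Powers map `H¹_ε` into `L²_ε`: `‖u^p‖_{L²_ε} ≤ C‖u‖^p_{H¹_ε}` for `p = 2,3`;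
consequently `N₀(R) = -3ν₀R² - R³` satisfies
`‖N₀(R)‖_{L²_ε} ≤ C(‖ν₀‖_{L^∞}‖R‖²_{H¹_ε} + ‖R‖³_{H¹_ε})`. -/
theorem nonlinear_term_bound (ν₀ : ℝ → ℝ) (Wmin : ℝ) (hWmin : 0 < Wmin)
    (hW : ∀ y : ℝ, Wmin ≤ 3 * ν₀ y ^ 2 - y) :
    ∃ C : ℝ, 0 < C ∧ ∃ ε₀ : ℝ, 0 < ε₀ ∧ ∀ ε : ℝ, 0 < ε → ε < ε₀ →
      ∀ u u' : ℝ → ℝ,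
        (∀ y ∈ Iio (ε ^ (-(2:ℝ)/3)), HasDerivAt u (u' y) y) →
        IntegrableOn (fun y => (1 - ε ^ ((2:ℝ)/3) * y) ^ (-(1:ℝ)/2) *
          (4 * (1 - ε ^ ((2:ℝ)/3) * y) * u' y ^ 2 + (3 * ν₀ y ^ 2 - y) * u y ^ 2))
          (Iio (ε ^ (-(2:ℝ)/3))) →
        (∀ p : ℕ, p = 2 ∨ p = 3 →
          Real.sqrt (∫ y in Iio (ε ^ (-(2:ℝ)/3)),
              (1 - ε ^ ((2:ℝ)/3) * y) ^ (-(1:ℝ)/2) * (u y ^ p) ^ 2)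
            ≤ C * (Real.sqrt (∫ y in Iio (ε ^ (-(2:ℝ)/3)),
                (1 - ε ^ ((2:ℝ)/3) * y) ^ (-(1:ℝ)/2) *
                (4 * (1 - ε ^ ((2:ℝ)/3) * y) * u' y ^ 2 +
                  (3 * ν₀ y ^ 2 - y) * u y ^ 2))) ^ p) ∧
        ∀ Mν : ℝ, (∀ y ∈ Iio (ε ^ (-(2:ℝ)/3)), |ν₀ y| ≤ Mν) →
          Real.sqrt (∫ y in Iio (ε ^ (-(2:ℝ)/3)),
              (1 - ε ^ ((2:ℝ)/3) * y) ^ (-(1:ℝ)/2) *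
              (-3 * ν₀ y * u y ^ 2 - u y ^ 3) ^ 2)
            ≤ C * (Mν * (Real.sqrt (∫ y in Iio (ε ^ (-(2:ℝ)/3)),
                (1 - ε ^ ((2:ℝ)/3) * y) ^ (-(1:ℝ)/2) *
                (4 * (1 - ε ^ ((2:ℝ)/3) * y) * u' y ^ 2 +
                  (3 * ν₀ y ^ 2 - y) * u y ^ 2))) ^ 2 +
              (Real.sqrt (∫ y in Iio (ε ^ (-(2:ℝ)/3)),
                (1 - ε ^ ((2:ℝ)/3) * y) ^ (-(1:ℝ)/2) *
                (4 * (1 - ε ^ ((2:ℝ)/3) * y) * u' y ^ 2 +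
                  (3 * ν₀ y ^ 2 - y) * u y ^ 2))) ^ 3) := by
  set κ := √(agmonConstant Wmin)
  have hκ : 0 < κ := Real.sqrt_pos.mpr (agmonConstant_pos hWmin)
  refine ⟨max (3 * κ) (κ ^ 2) / √Wmin, by positivity, 1, one_pos,
    fun ε hε hε1 u u' hu hint => ?_⟩
  have ha : 0 < ε ^ ((2:ℝ)/3) := by positivity
  have ha1 : ε ^ ((2:ℝ)/3) ≤ 1 := Real.rpow_le_one hε.le hε1.le (by norm_num)
  have hab := rpow_two_thirds_mul_rpow_neg_two_thirds hε
  have hW' : ∀ y ∈ Iio (ε ^ (-(2:ℝ)/3)), Wmin ≤ 3 * ν₀ y ^ 2 - y := fun y _ => hW y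
  set X := √(∫ y in Iio (ε ^ (-(2:ℝ)/3)), energyDensity (ε ^ ((2:ℝ)/3))
    (fun y => 3 * ν₀ y ^ 2 - y) u u' y)
  have hsup : ∀ y ∈ Iio (ε ^ (-(2:ℝ)/3)), |u y| ≤ κ * X := fun y hy => by
    rw [← Real.sqrt_mul (agmonConstant_pos hWmin).le]
    exact Real.abs_le_sqrt (sq_le_agmonConstant_mul ha ha1 hab hWmin hW' hu hint hy)
  refine ⟨fun p hp => ?_, fun M hM => ?_⟩
  · calc _ ≤ (κ * X) ^ (p - 1) / √Wmin * X :=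
          sqrt_integral_weight_mul_pow_sq_le ha hab hWmin hW' hint hsup (by omega)
      _ ≤ max (3 * κ) (κ ^ 2) / √Wmin * X ^ p := by
          rcases hp with rfl | rfl
          · calc (κ * X) ^ (2 - 1) / √Wmin * X = κ / √Wmin * X ^ 2 := by ring
              _ ≤ _ := by gcongr; exact le_max_of_le_left (by linarith)
          · calc (κ * X) ^ (3 - 1) / √Wmin * X = κ ^ 2 / √Wmin * X ^ 3 := by ring
              _ ≤ _ := by gcongr; exact le_max_right _ _
  · have hM0 : 0 ≤ M := (abs_nonneg _).trans (hM 0 (by simp only [mem_Iio]; positivity))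
    calc _ ≤ (3 * M * (κ * X) + (κ * X) ^ 2) / √Wmin * X :=
          sqrt_integral_weight_mul_nonlinear_sq_le ha hab hWmin hW' hint hsup hM
      _ = (3 * κ * (M * X ^ 2) + κ ^ 2 * X ^ 3) / √Wmin := by ring
      _ ≤ (max (3 * κ) (κ ^ 2) * (M * X ^ 2) + max (3 * κ) (κ ^ 2) * X ^ 3) / √Wmin := by
          gcongr
          exacts [le_max_left _ _, le_max_right _ _]
      _ = max (3 * κ) (κ ^ 2) / √Wmin * (M * X ^ 2 + X ^ 3) := by ring
end

section
/- Let χ₁, χ₂ be defined by χᵢ(y) = -(η/νᵢ²(y))∫_{-∞}^y νᵢ²(s)ds for positive continuous functions ν₁, ν₂ satisfying the standard bounds and lying within δ of ν₀ in L² ∩ L^∞ norm on (-∞, ε^{-2/3}), with δ < ½min(‖ν₀‖_{L²(-∞,0)}, ν₀(y₀)) for a fixed y₀ < 0. Then there is an ε-independent constant C(y₀) such that ‖χ₁-χ₂‖_{L^∞(y₀,0)} ≤ C(y₀)|η|(‖ν₁-ν₂‖_{L²(-∞,ε^{-2/3})} + ‖ν₁-ν₂‖_{L^∞(-∞,ε^{-2/3})}).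 -/
/-!
With `aᵢ = ∫_{-∞}^y νᵢ²` one has
`χ₁ - χ₂ = -η ((a₁ - a₂) / ν₁(y)² + a₂ (ν₂(y)² - ν₁(y)²) / (ν₁(y)² ν₂(y)²))`.
On `[y₀, 0]` the monotonicity of `ν₀` and `δ < ν₀(y₀)/2` keep `νᵢ(y)` between `ν₀(y₀)/2` and
`ν₀(0) + ν₀(y₀)/2`; closeness to `ν₀` in `L²` bounds `aᵢ` by `2δ² + 2‖ν₀‖²_{L²(-∞,0)}`; and
Cauchy–Schwarz gives `|a₁ - a₂| ≤ ‖ν₁ - ν₂‖_{L²} ‖ν₁ + ν₂‖_{L²}`. None of these bounds involves `ε`.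
-/

open Set Filter MeasureTheory

section SquareIntegrals

variable {α : Type*} [MeasurableSpace α] {μ : Measure α} {f g : α → ℝ}

theorem integral_abs_mul_le_sqrt_mul_sqrt (hf : MemLp f 2 μ) (hg : MemLp g 2 μ) :
    ∫ x, |f x| * |g x| ∂μ ≤ √(∫ x, f x ^ 2 ∂μ) * √(∫ x, g x ^ 2 ∂μ) := by
  have h := integral_mul_norm_le_Lp_mul_Lq Real.HolderConjugate.two_two
    (by rwa [ENNReal.ofReal_ofNat] : MemLp f (.ofReal 2) μ)
    (by rwa [ENNReal.ofReal_ofNat] : MemLp g (.ofReal 2) μ)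
  simpa only [Real.norm_eq_abs, Real.rpow_two, sq_abs, ← Real.sqrt_eq_rpow] using h

theorem abs_integral_sq_sub_integral_sq_le (hf : MemLp f 2 μ) (hg : MemLp g 2 μ) :
    |∫ x, f x ^ 2 ∂μ - ∫ x, g x ^ 2 ∂μ| ≤
      √(∫ x, (f x - g x) ^ 2 ∂μ) * √(∫ x, (f x + g x) ^ 2 ∂μ) := by
  rw [← integral_sub hf.integrable_sq hg.integrable_sq]
  calc |∫ x, (f x ^ 2 - g x ^ 2) ∂μ| ≤ ∫ x, |f x ^ 2 - g x ^ 2| ∂μ :=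
        abs_integral_le_integral_abs
    _ = ∫ x, |f x - g x| * |f x + g x| ∂μ := by
        congr with x
        rw [← abs_mul]
        ring_nf
    _ ≤ _ := integral_abs_mul_le_sqrt_mul_sqrt (hf.sub hg) (hf.add hg)

theorem integral_sq_add_le (hf : MemLp f 2 μ) (hg : MemLp g 2 μ) :
    ∫ x, (f x + g x) ^ 2 ∂μ ≤ 2 * ∫ x, f x ^ 2 ∂μ + 2 * ∫ x, g x ^ 2 ∂μ := by
  rw [← integral_const_mul, ← integral_const_mul,
    ← integral_add (hf.integrable_sq.const_mul 2) (hg.integrable_sq.const_mul 2)]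
  refine integral_mono (hf.add hg).integrable_sq
    ((hf.integrable_sq.const_mul 2).add (hg.integrable_sq.const_mul 2)) fun x => ?_
  linarith [add_sq_le (a := f x) (b := g x)]

theorem setIntegral_sq_mono_set {s t : Set α} (hf : IntegrableOn (fun x => f x ^ 2) t μ)
    (hst : s ⊆ t) : ∫ x in s, f x ^ 2 ∂μ ≤ ∫ x in t, f x ^ 2 ∂μ :=
  setIntegral_mono_set hf (ae_of_all _ fun _ => sq_nonneg _) hst.eventuallyLE

theorem setIntegral_sq_le_of_subset {s t : Set α} (hfg : MemLp (f - g) 2 (μ.restrict t))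
    (hg : MemLp g 2 (μ.restrict s)) (hst : s ⊆ t) :
    ∫ x in s, f x ^ 2 ∂μ ≤ 2 * ∫ x in t, (f x - g x) ^ 2 ∂μ + 2 * ∫ x in s, g x ^ 2 ∂μ := by
  have hfg_s := hfg.mono_measure (Measure.restrict_mono hst le_rfl)
  calc ∫ x in s, f x ^ 2 ∂μ = ∫ x in s, ((f x - g x) + g x) ^ 2 ∂μ := by simp
    _ ≤ 2 * ∫ x in s, (f x - g x) ^ 2 ∂μ + 2 * ∫ x in s, g x ^ 2 ∂μ :=
        integral_sq_add_le hfg_s hg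
    _ ≤ _ := by
        linarith [setIntegral_sq_mono_set (f := fun x => f x - g x) hfg.integrable_sq hst]

theorem abs_setIntegral_sq_sub_le {s t : Set α} (hf : MemLp f 2 (μ.restrict s))
    (hg : MemLp g 2 (μ.restrict s)) (hfg : IntegrableOn (fun x => (f x - g x) ^ 2) t μ)
    (hst : s ⊆ t) :
    |∫ x in s, f x ^ 2 ∂μ - ∫ x in s, g x ^ 2 ∂μ| ≤
      √(∫ x in t, (f x - g x) ^ 2 ∂μ) * √(2 * ∫ x in s, f x ^ 2 ∂μ + 2 * ∫ x in s, g x ^ 2 ∂μ) :=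
  (abs_integral_sq_sub_integral_sq_le hf hg).trans <|
    mul_le_mul (Real.sqrt_le_sqrt (setIntegral_sq_mono_set hfg hst))
      (Real.sqrt_le_sqrt (integral_sq_add_le hf hg)) (Real.sqrt_nonneg _) (Real.sqrt_nonneg _)

end SquareIntegrals

theorem ContinuousOn.memLp_two_restrict {α : Type*} [TopologicalSpace α] [MeasurableSpace α]
    [OpensMeasurableSpace α] {μ : Measure α} {f : α → ℝ} {s : Set α} (hf : ContinuousOn f s)
    (hs : MeasurableSet s) (hf2 : IntegrableOn (fun x => f x ^ 2) s μ) :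
    MemLp f 2 (μ.restrict s) :=
  (memLp_two_iff_integrable_sq (hf.aestronglyMeasurable hs)).2 hf2

theorem Monotone.mem_Icc_of_abs_sub_le {β : Type*} [Preorder β] {f g : β → ℝ} {a b y : β}
    {δ : ℝ} (hf : Monotone f) (hy : y ∈ Icc a b) (h : |g y - f y| ≤ δ) :
    g y ∈ Icc (f a - δ) (f b + δ) := by
  obtain ⟨hlo, hhi⟩ := abs_le.1 h
  constructor <;> linarith [hf hy.1, hf hy.2]

theorem abs_sq_sub_sq_le {x y R D : ℝ} (hx : |x| ≤ R) (hy : |y| ≤ R) (hxy : |x - y| ≤ D) :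
    |x ^ 2 - y ^ 2| ≤ 2 * R * D := by
  rw [sq_sub_sq, abs_mul]
  have hsum : |x + y| ≤ 2 * R := by linarith [abs_add_le x y]
  nlinarith [abs_nonneg (x + y), abs_nonneg (x - y)]

theorem abs_div_sq_sub_div_sq_le {a b n₁ n₂ m B : ℝ} (hm : 0 < m) (h₁ : m ≤ n₁) (h₂ : m ≤ n₂)
    (hb : 0 ≤ b) (hbB : b ≤ B) :
    |a / n₁ ^ 2 - b / n₂ ^ 2| ≤ |a - b| / m ^ 2 + B * |n₁ ^ 2 - n₂ ^ 2| / m ^ 4 := by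
  have hn₁ : 0 < n₁ := hm.trans_le h₁
  have hn₂ : 0 < n₂ := hm.trans_le h₂
  have hsplit : a / n₁ ^ 2 - b / n₂ ^ 2 =
      (a - b) / n₁ ^ 2 + b * (n₂ ^ 2 - n₁ ^ 2) / (n₁ ^ 2 * n₂ ^ 2) := by
    field_simp
    ring
  rw [hsplit]
  refine (abs_add_le _ _).trans (add_le_add ?_ ?_)
  · rw [abs_div, abs_of_pos (pow_pos hn₁ 2)]
    gcongr
  · rw [abs_div, abs_mul, abs_of_nonneg hb, abs_of_pos (by positivity : 0 < n₁ ^ 2 * n₂ ^ 2),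
      abs_sub_comm, show m ^ 4 = m ^ 2 * m ^ 2 by ring]
    have hB : 0 ≤ B := hb.trans hbB
    gcongr

noncomputable def chi (η : ℝ) (ν : ℝ → ℝ) (y : ℝ) : ℝ :=
  -(η / ν y ^ 2) * ∫ s in Iic y, ν s ^ 2

theorem abs_chi_sub_chi_le (η : ℝ) {ν₁ ν₂ : ℝ → ℝ} {y m B : ℝ} (hm : 0 < m) (h₁ : m ≤ ν₁ y)
    (h₂ : m ≤ ν₂ y) (hB : ∫ s in Iic y, ν₂ s ^ 2 ≤ B) :
    |chi η ν₁ y - chi η ν₂ y| ≤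
      |η| * (|(∫ s in Iic y, ν₁ s ^ 2) - ∫ s in Iic y, ν₂ s ^ 2| / m ^ 2 +
        B * |ν₁ y ^ 2 - ν₂ y ^ 2| / m ^ 4) := by
  have hsplit : chi η ν₁ y - chi η ν₂ y = -η * ((∫ s in Iic y, ν₁ s ^ 2) / ν₁ y ^ 2 -
      (∫ s in Iic y, ν₂ s ^ 2) / ν₂ y ^ 2) := by
    simp only [chi]
    ring
  rw [hsplit, abs_mul, abs_neg]
  exact mul_le_mul_of_nonneg_left (abs_div_sq_sub_div_sq_le hm h₁ h₂
    (setIntegral_nonneg measurableSet_Iic fun _ _ => sq_nonneg _) hB) (abs_nonneg η)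

/-- `ν` lies within `δ` of `ν₀` in `L² ∩ L^∞` on `(-∞, e)`. -/
structure IsPerturbation (ν₀ : ℝ → ℝ) (δ e : ℝ) (ν : ℝ → ℝ) : Prop where
  continuousOn : ContinuousOn ν (Iio e)
  integrableOn_sq : IntegrableOn (fun s => ν s ^ 2) (Iic 0)
  abs_sub_le : ∀ y ∈ Iio e, |ν y - ν₀ y| ≤ δ
  sqrt_integral_add_iSup_le :
    √(∫ y in Iio e, (ν y - ν₀ y) ^ 2) + (⨆ y : Iio e, |ν y - ν₀ y|) ≤ δ

namespace IsPerturbation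

variable {ν₀ ν ν₁ ν₂ : ℝ → ℝ} {δ e y : ℝ}

theorem memLp_Iic (h : IsPerturbation ν₀ δ e ν) (he : 0 < e) (hy : y ≤ 0) :
    MemLp ν 2 (volume.restrict (Iic y)) :=
  (h.continuousOn.mono (Iic_subset_Iio.2 (hy.trans_lt he))).memLp_two_restrict measurableSet_Iic
    (h.integrableOn_sq.mono_set (Iic_subset_Iic.2 hy))

theorem memLp_sub (h : IsPerturbation ν₀ δ e ν) (hν₀ : Continuous ν₀)
    (hν₀int : IntegrableOn (fun s => ν₀ s ^ 2) (Iic 0)) (he : 0 < e) :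
    MemLp (ν - ν₀) 2 (volume.restrict (Iio e)) := by
  have hcont : ContinuousOn (ν - ν₀) (Iio e) := h.continuousOn.sub hν₀.continuousOn
  have hleft : MemLp (ν - ν₀) 2 (volume.restrict (Iic 0)) :=
    (h.memLp_Iic he le_rfl).sub (hν₀.continuousOn.memLp_two_restrict measurableSet_Iic hν₀int)
  have hright : MemLp (ν - ν₀) 2 (volume.restrict (Ioo 0 e)) :=
    .of_bound ((hcont.mono Ioo_subset_Iio_self).aestronglyMeasurable measurableSet_Ioo) δ
      ((ae_restrict_iff' measurableSet_Ioo).2 (ae_of_all _ fun y hy => h.abs_sub_le y hy.2))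
  refine hcont.memLp_two_restrict measurableSet_Iio ?_
  rw [← Iic_union_Ioo_eq_Iio he]
  exact IntegrableOn.union hleft.integrable_sq hright.integrable_sq

theorem integral_sub_sq_le (h : IsPerturbation ν₀ δ e ν) :
    ∫ y in Iio e, (ν y - ν₀ y) ^ 2 ≤ δ ^ 2 := by
  have hsup : 0 ≤ ⨆ y : Iio e, |ν y - ν₀ y| := Real.iSup_nonneg fun _ => abs_nonneg _
  exact (Real.sqrt_le_iff.1 (by linarith [h.sqrt_integral_add_iSup_le])).2

theorem setIntegral_Iic_sq_le (h : IsPerturbation ν₀ δ e ν) (hν₀ : Continuous ν₀)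
    (hν₀int : IntegrableOn (fun s => ν₀ s ^ 2) (Iic 0)) (he : 0 < e) (hy : y ≤ 0) :
    ∫ s in Iic y, ν s ^ 2 ≤ 2 * δ ^ 2 + 2 * ∫ s in Iic 0, ν₀ s ^ 2 :=
  calc ∫ s in Iic y, ν s ^ 2 ≤ ∫ s in Iic 0, ν s ^ 2 :=
        setIntegral_sq_mono_set h.integrableOn_sq (Iic_subset_Iic.2 hy)
    _ ≤ 2 * (∫ s in Iio e, (ν s - ν₀ s) ^ 2) + 2 * ∫ s in Iic 0, ν₀ s ^ 2 :=
        setIntegral_sq_le_of_subset (h.memLp_sub hν₀ hν₀int he)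
          (hν₀.continuousOn.memLp_two_restrict measurableSet_Iic hν₀int) (Iic_subset_Iio.2 he)
    _ ≤ _ := by linarith [h.integral_sub_sq_le]

theorem abs_setIntegral_Iic_sq_sub_le (h₁ : IsPerturbation ν₀ δ e ν₁)
    (h₂ : IsPerturbation ν₀ δ e ν₂) (hν₀ : Continuous ν₀)
    (hν₀int : IntegrableOn (fun s => ν₀ s ^ 2) (Iic 0)) (he : 0 < e) (hy : y ≤ 0) :
    |(∫ s in Iic y, ν₁ s ^ 2) - ∫ s in Iic y, ν₂ s ^ 2| ≤
      √(∫ s in Iio e, (ν₁ s - ν₂ s) ^ 2) *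
        √(4 * (2 * δ ^ 2 + 2 * ∫ s in Iic 0, ν₀ s ^ 2)) := by
  have hdiff : MemLp (ν₁ - ν₂) 2 (volume.restrict (Iio e)) := by
    simpa using (h₁.memLp_sub hν₀ hν₀int he).sub (h₂.memLp_sub hν₀ hν₀int he)
  refine (abs_setIntegral_sq_sub_le (h₁.memLp_Iic he hy) (h₂.memLp_Iic he hy)
    hdiff.integrable_sq (Iic_subset_Iio.2 (hy.trans_lt he))).trans ?_
  gcongr
  linarith [h₁.setIntegral_Iic_sq_le hν₀ hν₀int he hy, h₂.setIntegral_Iic_sq_le hν₀ hν₀int he hy]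

theorem abs_chi_sub_chi_le (η : ℝ) {m K : ℝ} (h₁ : IsPerturbation ν₀ δ e ν₁)
    (h₂ : IsPerturbation ν₀ δ e ν₂) (hν₀ : Continuous ν₀)
    (hν₀int : IntegrableOn (fun s => ν₀ s ^ 2) (Iic 0)) (he : 0 < e) (hy : y ≤ 0) (hm : 0 < m)
    (hm₁ : m ≤ ν₁ y) (hm₂ : m ≤ ν₂ y) (hK : |ν₁ y ^ 2 - ν₂ y ^ 2| ≤ K) :
    |chi η ν₁ y - chi η ν₂ y| ≤
      |η| * (√(4 * (2 * δ ^ 2 + 2 * ∫ s in Iic 0, ν₀ s ^ 2)) / m ^ 2 *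
          √(∫ s in Iio e, (ν₁ s - ν₂ s) ^ 2) +
        (2 * δ ^ 2 + 2 * ∫ s in Iic 0, ν₀ s ^ 2) / m ^ 4 * K) := by
  have hB := h₂.setIntegral_Iic_sq_le hν₀ hν₀int he hy
  refine (_root_.abs_chi_sub_chi_le η hm hm₁ hm₂ hB).trans ?_
  rw [div_mul_eq_mul_div, div_mul_eq_mul_div, mul_comm _ √_]
  gcongr
  exact h₁.abs_setIntegral_Iic_sq_sub_le h₂ hν₀ hν₀int he hy

end IsPerturbation

theorem lipschitz_nu_to_chi_general (ν₀ : ℝ → ℝ)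
    (hν₀cont : Continuous ν₀) (hν₀pos : ∀ y : ℝ, 0 < ν₀ y) (hν₀mono : StrictMono ν₀)
    (hν₀int : IntegrableOn (fun s => ν₀ s ^ 2) (Iic 0))
    (Cp Cm δ y₀ : ℝ)
    (hδ : δ < (1/2) * min (Real.sqrt (∫ s in Iic (0:ℝ), ν₀ s ^ 2)) (ν₀ y₀)) :
    ∃ C : ℝ, 0 < C ∧ ∃ ε₀ : ℝ, 0 < ε₀ ∧ ∀ ε : ℝ, 0 < ε → ε < ε₀ → ∀ η : ℝ,
      ∀ ν₁ ν₂ : ℝ → ℝ,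
        (∀ ν : ℝ → ℝ, ν = ν₁ ∨ ν = ν₂ →
          ContinuousOn ν (Iio (ε ^ (-(2:ℝ)/3))) ∧
          (∀ y ∈ Iio (ε ^ (-(2:ℝ)/3)), 0 < ν y) ∧
          IntegrableOn (fun s => ν s ^ 2) (Iic 0) ∧
          (∀ y ∈ Ioo (0:ℝ) (ε ^ (-(2:ℝ)/3)), y / Cp ≤ ν y ^ 2 ∧ ν y ^ 2 ≤ Cp * (1 + y)) ∧
          (∀ y : ℝ, y < 0 → (∫ s in Iic y, ν s ^ 2) / ν y ^ 2 ≤ Cm) ∧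
          (∀ y ∈ Iio (ε ^ (-(2:ℝ)/3)), |ν y - ν₀ y| ≤ δ) ∧
          Real.sqrt (∫ y in Iio (ε ^ (-(2:ℝ)/3)), (ν y - ν₀ y) ^ 2) +
            (⨆ y : Iio (ε ^ (-(2:ℝ)/3)), |ν y - ν₀ y|) ≤ δ) →
        ∀ D : ℝ, (∀ y ∈ Iio (ε ^ (-(2:ℝ)/3)), |ν₁ y - ν₂ y| ≤ D) →
          ∀ y ∈ Icc y₀ (0:ℝ),
            |(-(η / ν₁ y ^ 2) * ∫ s in Iic y, ν₁ s ^ 2) -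
              (-(η / ν₂ y ^ 2) * ∫ s in Iic y, ν₂ s ^ 2)|
              ≤ C * |η| *
                (Real.sqrt (∫ y in Iio (ε ^ (-(2:ℝ)/3)), (ν₁ y - ν₂ y) ^ 2) + D) := by
  have hm : 0 < ν₀ y₀ / 2 := half_pos (hν₀pos y₀)
  have hδm : δ ≤ ν₀ y₀ / 2 := by linarith [min_le_right (√(∫ s in Iic (0:ℝ), ν₀ s ^ 2)) (ν₀ y₀)]
  have hR : 0 ≤ ν₀ 0 + ν₀ y₀ / 2 := by linarith [hν₀pos 0]
  set m := ν₀ y₀ / 2 with hm_def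
  set R := ν₀ 0 + m with hR_def
  set B := 2 * δ ^ 2 + 2 * ∫ s in Iic (0:ℝ), ν₀ s ^ 2 with hB_def
  set c₁ := √(4 * B) / m ^ 2 with hc₁_def
  set c₂ := B / m ^ 4 * (2 * R) with hc₂_def
  have hc₁ : 0 ≤ c₁ := by positivity
  have hc₂ : 0 ≤ c₂ := by positivity
  refine ⟨c₁ + c₂ + 1, by positivity, 1, one_pos, ?_⟩
  intro ε hε _ η ν₁ ν₂ hν D hD y hy
  set e := ε ^ (-(2:ℝ)/3)
  have he : 0 < e := Real.rpow_pos_of_pos hε _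
  have hye : y < e := hy.2.trans_lt he
  have hpert : ∀ ν, ν = ν₁ ∨ ν = ν₂ → IsPerturbation ν₀ δ e ν := fun ν hν' => by
    obtain ⟨hcont, -, hint, -, -, hclose, hL2⟩ := hν ν hν'
    exact ⟨hcont, hint, hclose, hL2⟩
  have h₁ := hpert ν₁ (.inl rfl)
  have h₂ := hpert ν₂ (.inr rfl)
  obtain ⟨hlo₁, hhi₁⟩ := hν₀mono.monotone.mem_Icc_of_abs_sub_le hy (h₁.abs_sub_le y hye)
  obtain ⟨hlo₂, hhi₂⟩ := hν₀mono.monotone.mem_Icc_of_abs_sub_le hy (h₂.abs_sub_le y hye)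
  have hn : |ν₁ y ^ 2 - ν₂ y ^ 2| ≤ 2 * R * D :=
    abs_sq_sub_sq_le (abs_le.2 ⟨by linarith, by linarith⟩) (abs_le.2 ⟨by linarith, by linarith⟩)
      (hD y hye)
  have hD0 : 0 ≤ D := (abs_nonneg _).trans (hD y hye)
  set S := √(∫ s in Iio e, (ν₁ s - ν₂ s) ^ 2)
  have hS : 0 ≤ S := Real.sqrt_nonneg _
  have key := h₁.abs_chi_sub_chi_le η h₂ hν₀cont hν₀int he hy.2 hm (by linarith) (by linarith) hn
  rw [← hB_def, ← hc₁_def] at key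
  calc |chi η ν₁ y - chi η ν₂ y| ≤ |η| * (c₁ * S + B / m ^ 4 * (2 * R * D)) := key
    _ ≤ |η| * ((c₁ + c₂ + 1) * (S + D)) := by gcongr; nlinarith
    _ = (c₁ + c₂ + 1) * |η| * (S + D) := by ring

/-- Lemma 5.2 (Lipschitz continuity of the map `ν → χ` on `[y₀,0]`): if `ν₁, ν₂` satisfy
the standard bounds and lie within `δ` of the Hastings–McLeod solution `ν₀` in
`L² ∩ L^∞` on `(-∞, ε^{-2/3})`, with `δ < ½ min(‖ν₀‖_{L²(-∞,0)}, ν₀(y₀))`, then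
`‖χ₁ - χ₂‖_{L^∞(y₀,0)} ≤ C(y₀)|η|(‖ν₁-ν₂‖_{L²} + ‖ν₁-ν₂‖_{L^∞})` with `C(y₀)`
independent of `ε`. -/
theorem lipschitz_nu_to_chi (ν₀ : ℝ → ℝ)
    (hν₀cont : Continuous ν₀) (hν₀pos : ∀ y : ℝ, 0 < ν₀ y) (hν₀mono : StrictMono ν₀)
    (hν₀int : IntegrableOn (fun s => ν₀ s ^ 2) (Iic 0))
    (Cp Cm δ y₀ : ℝ) (hCp : 1 ≤ Cp) (hCm : 0 < Cm) (hy₀ : y₀ < 0) (hδpos : 0 < δ)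
    (hδ : δ < (1/2) * min (Real.sqrt (∫ s in Iic (0:ℝ), ν₀ s ^ 2)) (ν₀ y₀)) :
    ∃ C : ℝ, 0 < C ∧ ∃ ε₀ : ℝ, 0 < ε₀ ∧ ∀ ε : ℝ, 0 < ε → ε < ε₀ → ∀ η : ℝ,
      ∀ ν₁ ν₂ : ℝ → ℝ,
        (∀ ν : ℝ → ℝ, ν = ν₁ ∨ ν = ν₂ →
          ContinuousOn ν (Iio (ε ^ (-(2:ℝ)/3))) ∧
          (∀ y ∈ Iio (ε ^ (-(2:ℝ)/3)), 0 < ν y) ∧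
          IntegrableOn (fun s => ν s ^ 2) (Iic 0) ∧
          (∀ y ∈ Ioo (0:ℝ) (ε ^ (-(2:ℝ)/3)), y / Cp ≤ ν y ^ 2 ∧ ν y ^ 2 ≤ Cp * (1 + y)) ∧
          (∀ y : ℝ, y < 0 → (∫ s in Iic y, ν s ^ 2) / ν y ^ 2 ≤ Cm) ∧
          (∀ y ∈ Iio (ε ^ (-(2:ℝ)/3)), |ν y - ν₀ y| ≤ δ) ∧
          Real.sqrt (∫ y in Iio (ε ^ (-(2:ℝ)/3)), (ν y - ν₀ y) ^ 2) +
            (⨆ y : Iio (ε ^ (-(2:ℝ)/3)), |ν y - ν₀ y|) ≤ δ) →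
        ∀ D : ℝ, (∀ y ∈ Iio (ε ^ (-(2:ℝ)/3)), |ν₁ y - ν₂ y| ≤ D) →
          ∀ y ∈ Icc y₀ (0:ℝ),
            |(-(η / ν₁ y ^ 2) * ∫ s in Iic y, ν₁ s ^ 2) -
              (-(η / ν₂ y ^ 2) * ∫ s in Iic y, ν₂ s ^ 2)|
              ≤ C * |η| *
                (Real.sqrt (∫ y in Iio (ε ^ (-(2:ℝ)/3)), (ν₁ y - ν₂ y) ^ 2) + D) :=
  lipschitz_nu_to_chi_general ν₀ hν₀cont hν₀pos hν₀mono hν₀int Cp Cm δ y₀ hδ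
end
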